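/- arXiv:0711.1512 — 12 statements merged into one kernel-verified Lean document; each statement's English description precedes it below -/
import Mathlib

section
/- Let f: (X, d_X) → (Y, d_Y) be a coarse embedding with contraction function ρ₋ and dilatation function ρ₊ (both increasing, ρ₋(d(x,y)) ≤ d(f(x),f(y)) ≤ ρ₊(d(x,y)), ρ₋ → ∞). If D is an n-dimensional control function of Y, then ρ₋⁻¹ ∘ D ∘ ρ₊ is an n-dimensional control function of X. -/
open Filter

/-- An `s`-scale chain inside `U` from `x` to `y` with respect to distance function `d`. -/
def ScaleChain {X : Type*} (d : X → X → ℝ) (s : ℝ) (U : Set X) (x y : X) : Prop :=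
  ∃ (m : ℕ) (c : ℕ → X), c 0 = x ∧ c m = y ∧ (∀ i ≤ m, c i ∈ U) ∧
    ∀ i < m, d (c i) (c (i + 1)) < s

/-- `D` is an `n`-dimensional control function for the distance `d`: for every `s > 0`
there is a cover by `n+1` sets whose `s`-scale connected components are `D s`-bounded. -/
def IsControlFun {X : Type*} (d : X → X → ℝ) (n : ℕ) (D : ℝ → ℝ) : Prop :=
  ∀ s : ℝ, 0 < s → ∃ U : Fin (n + 1) → Set X,
    (∀ x, ∃ i, x ∈ U i) ∧ ∀ i x y, ScaleChain d s (U i) x y → d x y ≤ D s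

theorem control_of_coarse_embedding {X Y : Type*} [PseudoMetricSpace X] [PseudoMetricSpace Y]
    (f : X → Y) (ρm ρp : ℝ → ℝ)
    (hρm : Monotone ρm) (hρp : StrictMono ρp)
    (hρp0 : ∀ t, 0 ≤ t → 0 ≤ ρp t)
    (hρmdiv : Tendsto ρm atTop atTop)
    (hlow : ∀ x y : X, ρm (dist x y) ≤ dist (f x) (f y))
    (hup : ∀ x y : X, dist (f x) (f y) ≤ ρp (dist x y))
    (n : ℕ) (D : ℝ → ℝ) (hD : Monotone D)
    (hctrl : IsControlFun (fun a b : Y => dist a b) n D) :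
    IsControlFun (fun a b : X => dist a b) n
      (fun s => sSup {t : ℝ | ρm t ≤ D (ρp s)}) := by
  intro s hs
  have hps : 0 < ρp s := lt_of_le_of_lt (hρp0 0 le_rfl) (hρp hs)
  obtain ⟨V, hVcov, hVctrl⟩ := hctrl (ρp s) hps
  refine ⟨fun i => f ⁻¹' (V i), fun x => hVcov (f x), ?_⟩
  intro i x y hchain
  -- the image chain
  obtain ⟨m, c, hc0, hcm, hcU, hcd⟩ := hchain
  have hYchain : ScaleChain (fun a b : Y => dist a b) (ρp s) (V i) (f x) (f y) := by
    refine ⟨m, fun j => f (c j), by simpa using congrArg f hc0, by simpa using congrArg f hcm, fun j hj => hcU j hj, fun j hj => ?_⟩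
    exact lt_of_le_of_lt (hup _ _) (hρp (hcd j hj))
  have hy : dist (f x) (f y) ≤ D (ρp s) := hVctrl i _ _ hYchain
  have hmem : dist x y ∈ {t : ℝ | ρm t ≤ D (ρp s)} := le_trans (hlow x y) hy
  -- bounded above
  obtain ⟨t0, ht0⟩ := (tendsto_atTop_atTop.mp hρmdiv) (D (ρp s) + 1)
  have hbdd : BddAbove {t : ℝ | ρm t ≤ D (ρp s)} := by
    refine ⟨t0, fun t ht => ?_⟩
    by_contra h
    push_neg at h
    have := ht0 t h.le
    simp only [Set.mem_setOf_eq] at ht; linarith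
  exact le_csSup hbdd hmem
end

section
/- If (X, d) is a metric space and the metric space (X, log(1+d)) has asymptotic Assouad-Nagata dimension at most n, then (X, d) admits an n-dimensional control function that is bounded above by a polynomial. -/
/-- Asymptotic Assouad-Nagata dimension at most `n`: there is a linear-plus-constant
`n`-dimensional control function. -/
def ANdimLE {X : Type*} (d : X → X → ℝ) (n : ℕ) : Prop :=
  ∃ C : ℝ, 0 < C ∧ ∃ b : ℝ, IsControlFun d n (fun s => C * s + b)

theorem polynomial_control_of_log_metric {X : Type*} [PseudoMetricSpace X] (n : ℕ)
    (h : ANdimLE (fun x y : X => Real.log (1 + dist x y)) n) :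
    ∃ (D : ℝ → ℝ) (p : Polynomial ℝ),
      IsControlFun (fun x y : X => dist x y) n D ∧ ∀ s : ℝ, 0 < s → D s ≤ p.eval s := by
  obtain ⟨C, hC, b, hctl⟩ := h
  refine ⟨fun s => Real.exp (C * Real.log (1 + s) + b) - 1,
    Polynomial.C (Real.exp b) * (1 + Polynomial.X) ^ ⌈C⌉₊, ?_, ?_⟩
  · intro s hs
    have h1s : (1 : ℝ) < 1 + s := by linarith
    have hs' : 0 < Real.log (1 + s) := Real.log_pos h1s
    obtain ⟨U, hcov, hU⟩ := hctl (Real.log (1 + s)) hs'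
    refine ⟨U, hcov, ?_⟩
    rintro i x y ⟨m, c, hc0, hcm, hmem, hstep⟩
    have key : Real.log (1 + dist x y) ≤ C * Real.log (1 + s) + b := by
      refine hU i x y ⟨m, c, hc0, hcm, hmem, fun j hj => ?_⟩
      have := hstep j hj
      exact Real.log_lt_log (by positivity) (by linarith)
    have h2 : 1 + dist x y ≤ Real.exp (C * Real.log (1 + s) + b) := by
      calc 1 + dist x y = Real.exp (Real.log (1 + dist x y)) := by
            rw [Real.exp_log (by positivity)]
        _ ≤ _ := Real.exp_le_exp.2 key
    show dist x y ≤ Real.exp (C * Real.log (1 + s) + b) - 1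
    linarith
  · intro s hs
    have h1s : (0 : ℝ) < 1 + s := by linarith
    have heq : Real.exp (C * Real.log (1 + s) + b)
        = Real.exp b * (1 + s) ^ C := by
      rw [Real.rpow_def_of_pos h1s, Real.exp_add, mul_comm C]; ring
    have hle : (1 + s) ^ C ≤ (1 + s) ^ (⌈C⌉₊ : ℝ) :=
      Real.rpow_le_rpow_of_exponent_le (by linarith) (Nat.le_ceil C)
    have hle' : (1 + s) ^ C ≤ (1 + s) ^ ⌈C⌉₊ := by
      rwa [Real.rpow_natCast] at hle
    have : Real.exp (C * Real.log (1 + s) + b) ≤ Real.exp b * (1 + s) ^ ⌈C⌉₊ := by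
      rw [heq]
      exact mul_le_mul_of_nonneg_left hle' (Real.exp_nonneg b)
    simp only [Polynomial.eval_mul, Polynomial.eval_C, Polynomial.eval_pow,
      Polynomial.eval_add, Polynomial.eval_one, Polynomial.eval_X]
    linarith
end

section
/- Let (X, d_X) be a metric space satisfying d_X(x,y) ≤ (1+ε(d_X(x,y)))·max{d_X(x,z), d_X(y,z)} + k for all x, y, z ∈ X, where k > 0 is a constant and ε: ℝ₊ → ℝ₊ is a function with ε(t) → 0 as t → ∞. Then every asymptotic cone of (X, d_X) is an ultrametric space. -/
open Filter Topology

/-! Rescaling the defect inequality by `dₙ` turns the additive error `k` into `k / dₙ → 0`. When the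
cone distance `Dxy` is positive, `d_X(xₙ, yₙ) → ∞` along `ω`, so the multiplicative error
`ε(d_X(xₙ, yₙ))` tends to `0` as well, and the inequality passes to the ultralimit as
`Dxy ≤ max Dxz Dyz`. -/

section

variable {ι : Type*} {l : Filter ι}

theorem Filter.Tendsto.atTop_of_div {f d : ι → ℝ} {L : ℝ}
    (hf : Tendsto (fun n => f n / d n) l (𝓝 L)) (hL : 0 < L)
    (hd : ∀ n, 0 < d n) (hdiv : Tendsto d l atTop) : Tendsto f l atTop :=
  (hf.pos_mul_atTop hL hdiv).congr fun n => div_mul_cancel₀ _ (hd n).ne'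

theorem le_max_of_le_mul_max_add_of_tendsto_div [l.NeBot] {a b c d e : ι → ℝ} {k A B C : ℝ}
    (hbound : ∀ n, a n ≤ (1 + e n) * max (b n) (c n) + k)
    (hd : ∀ n, 0 < d n) (hdiv : Tendsto d l atTop) (he : Tendsto e l (𝓝 0))
    (ha : Tendsto (fun n => a n / d n) l (𝓝 A))
    (hb : Tendsto (fun n => b n / d n) l (𝓝 B))
    (hc : Tendsto (fun n => c n / d n) l (𝓝 C)) :
    A ≤ max B C := by
  have hrescaled : ∀ n, a n / d n ≤ (1 + e n) * max (b n / d n) (c n / d n) + k / d n := by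
    intro n
    rw [max_div_div_right (hd n).le, ← mul_div_assoc, ← add_div]
    exact div_le_div_of_nonneg_right (hbound n) (hd n).le
  have hlim : Tendsto (fun n => (1 + e n) * max (b n / d n) (c n / d n) + k / d n) l
      (𝓝 ((1 + 0) * max B C + 0)) :=
    ((tendsto_const_nhds.add he).mul (hb.max hc)).add (tendsto_const_nhds.div_atTop hdiv)
  simpa using le_of_tendsto_of_tendsto' ha hlim hrescaled

end

theorem cone_ultrametric_of_eps_k_general {X : Type*} [PseudoMetricSpace X]
    (ε : ℝ → ℝ) (hε : Tendsto ε atTop (nhds 0))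
    (k : ℝ)
    (hX : ∀ x y z : X, dist x y ≤ (1 + ε (dist x y)) * max (dist x z) (dist y z) + k)
    (ω : Ultrafilter ℕ)
    (d : ℕ → ℝ) (hd : ∀ n, 0 < d n) (hdiv : Tendsto d (ω : Filter ℕ) atTop)
    (x y z : ℕ → X) (Dxy Dxz Dyz : ℝ)
    (hxy : Tendsto (fun n => dist (x n) (y n) / d n) (ω : Filter ℕ) (nhds Dxy))
    (hxz : Tendsto (fun n => dist (x n) (z n) / d n) (ω : Filter ℕ) (nhds Dxz))
    (hyz : Tendsto (fun n => dist (y n) (z n) / d n) (ω : Filter ℕ) (nhds Dyz)) :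
    Dxy ≤ max Dxz Dyz := by
  rcases le_or_gt Dxy 0 with hDxy | hDxy
  · have hDxz : 0 ≤ Dxz := ge_of_tendsto' hxz fun n => div_nonneg dist_nonneg (hd n).le
    exact hDxy.trans (le_max_of_le_left hDxz)
  have hdist : Tendsto (fun n => dist (x n) (y n)) (ω : Filter ℕ) atTop :=
    hxy.atTop_of_div hDxy hd hdiv
  exact le_max_of_le_mul_max_add_of_tendsto_div (fun n => hX (x n) (y n) (z n)) hd hdiv
    (hε.comp hdist) hxy hxz hyz

/-- If `d_X(x,y) ≤ (1+ε(d_X(x,y)))·max{d_X(x,z),d_X(y,z)} + k` with `ε(t) → 0` as `t → ∞`,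
then every asymptotic cone of `X` is ultrametric: for any nonprincipal ultrafilter `ω`,
`ω`-divergent scaling sequence `d`, sequences of points and ultralimit distances
`Dxy, Dxz, Dyz` of the rescaled distances, one has `Dxy ≤ max Dxz Dyz`. -/
theorem cone_ultrametric_of_eps_k {X : Type*} [PseudoMetricSpace X]
    (ε : ℝ → ℝ) (hε0 : ∀ t, 0 ≤ ε t) (hε : Tendsto ε atTop (nhds 0))
    (k : ℝ) (hk : 0 < k)
    (hX : ∀ x y z : X, dist x y ≤ (1 + ε (dist x y)) * max (dist x z) (dist y z) + k)
    (ω : Ultrafilter ℕ) (hω : (ω : Filter ℕ) ≤ cofinite)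
    (d : ℕ → ℝ) (hd : ∀ n, 0 < d n) (hdiv : Tendsto d (ω : Filter ℕ) atTop)
    (x y z : ℕ → X) (Dxy Dxz Dyz : ℝ)
    (hxy : Tendsto (fun n => dist (x n) (y n) / d n) (ω : Filter ℕ) (nhds Dxy))
    (hxz : Tendsto (fun n => dist (x n) (z n) / d n) (ω : Filter ℕ) (nhds Dxz))
    (hyz : Tendsto (fun n => dist (y n) (z n) / d n) (ω : Filter ℕ) (nhds Dyz)) :
    Dxy ≤ max Dxz Dyz :=
  cone_ultrametric_of_eps_k_general ε hε k hX ω d hd hdiv x y z Dxy Dxz Dyz hxy hxz hyz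
end

section
/- Let (X, d_X) be a metric space, ω a nonprincipal ultrafilter on ℕ, and (f_m) a sequence of n-dimensional dilated cubes f_m: {0,1,...,k_m}ⁿ → X with dilatation constants C_m, such that lim_ω k_m = ∞. If (d_m) is an ω-divergent sequence of positive reals with lim_ω (C_m·k_m)/d_m = s for some 0 ≤ s < ∞, then the asymptotic cone Cone_ω(X, c, d) with c = (f_m(0)) contains an isometric copy of the cube [0,s]ⁿ with the ℓ¹-metric. -/
/-!
Take the scale `ε_m = C_m / d_m`. Since `ε_m k_m → s` while `k_m → ∞`, `ε_m → 0`. Send a point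
`t ∈ [0,s]^n` to the sequence of grid points `min ⌊t_i / ε_m⌋ k_m`, whose coordinates, rescaled by
`ε_m`, converge to `t_i` (truncating at `k_m` costs nothing in the limit because `ε_m k_m → s ≥ t_i`).
The cube distance divided by `d_m` is the `ℓ¹`-distance of the rescaled grid points, so it
converges to `∑ |t_i - u_i|`.
-/

open Filter Topology

noncomputable def clampedFloor (K : ℕ) (x : ℝ) : Fin (K + 1) :=
  ⟨min ⌊x⌋₊ K, Nat.lt_succ_of_le (min_le_right _ _)⟩

lemma clampedFloor_zero (K : ℕ) : clampedFloor K 0 = 0 := by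
  simp [clampedFloor]

lemma tendsto_nhds_zero_of_mul_tendsto_atTop {ι : Type*} {l : Filter ι} {a b : ι → ℝ} {s : ℝ}
    (hab : Tendsto (fun i => a i * b i) l (𝓝 s)) (hb : Tendsto b l atTop) :
    Tendsto a l (𝓝 0) := by
  refine (hab.div_atTop hb).congr' ?_
  filter_upwards [hb.eventually_gt_atTop 0] with i hi
  exact mul_div_cancel_right₀ _ hi.ne'

lemma sub_le_mul_floor_div {ε v : ℝ} (hε : 0 < ε) : v - ε ≤ ε * ⌊v / ε⌋₊ :=
  calc v - ε = ε * (v / ε - 1) := by field_simp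
    _ ≤ ε * ⌊v / ε⌋₊ := mul_le_mul_of_nonneg_left (Nat.sub_one_lt_floor _).le hε.le

lemma mul_floor_div_le {ε v : ℝ} (hε : 0 < ε) (hv : 0 ≤ v) : ε * ⌊v / ε⌋₊ ≤ v :=
  calc ε * ⌊v / ε⌋₊ ≤ ε * (v / ε) :=
        mul_le_mul_of_nonneg_left (Nat.floor_le (div_nonneg hv hε.le)) hε.le
    _ = v := by field_simp

section GridApproximation

variable {ι : Type*} {l : Filter ι} {ε : ι → ℝ}

lemma tendsto_mul_floor_div (hε : ∀ i, 0 < ε i) (hε0 : Tendsto ε l (𝓝 0)) {v : ℝ}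
    (hv : 0 ≤ v) : Tendsto (fun i => ε i * ⌊v / ε i⌋₊) l (𝓝 v) := by
  have hlow : Tendsto (fun i => v - ε i) l (𝓝 v) := by
    simpa using (tendsto_const_nhds (x := v)).sub hε0
  exact tendsto_of_tendsto_of_tendsto_of_le_of_le hlow tendsto_const_nhds
    (fun i => sub_le_mul_floor_div (hε i)) (fun i => mul_floor_div_le (hε i) hv)

lemma tendsto_mul_clampedFloor_div (hε : ∀ i, 0 < ε i) (hε0 : Tendsto ε l (𝓝 0))
    {K : ι → ℕ} {s v : ℝ} (hK : Tendsto (fun i => ε i * K i) l (𝓝 s)) (hv : v ∈ Set.Icc 0 s) :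
    Tendsto (fun i => ε i * (clampedFloor (K i) (v / ε i) : ℕ)) l (𝓝 v) := by
  have hmin := (tendsto_mul_floor_div hε hε0 hv.1).min hK
  rw [min_eq_left hv.2] at hmin
  refine hmin.congr fun i => ?_
  simp only [clampedFloor, Nat.cast_min, mul_min_of_nonneg _ _ (hε i).le]

end GridApproximation

lemma mul_sum_abs_sub_div {ι : Type*} (S : Finset ι) {c D : ℝ} (hcD : 0 ≤ c / D) (a b : ι → ℝ) :
    c * (∑ i ∈ S, |a i - b i|) / D = ∑ i ∈ S, |c / D * a i - c / D * b i| := by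
  rw [mul_div_right_comm, Finset.mul_sum]
  refine Finset.sum_congr rfl fun i _ => ?_
  rw [← mul_sub, abs_mul, abs_of_nonneg hcD]

theorem cube_in_asymptotic_cone_general {X : Type*} [PseudoMetricSpace X] (n : ℕ)
    (ω : Ultrafilter ℕ)
    (k : ℕ → ℕ) (C : ℕ → ℝ) (hC : ∀ m, 1 ≤ C m)
    (f : ∀ m, (Fin n → Fin (k m + 1)) → X)
    (hcube : ∀ m (a b : Fin n → Fin (k m + 1)),
      dist (f m a) (f m b) = C m * ∑ i, |((a i : ℕ) : ℝ) - ((b i : ℕ) : ℝ)|)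
    (hk : Tendsto (fun m => ((k m : ℕ) : ℝ)) (ω : Filter ℕ) atTop)
    (d : ℕ → ℝ) (hd : ∀ m, 0 < d m)
    (s : ℝ)
    (hlim : Tendsto (fun m => C m * (k m : ℝ) / d m) (ω : Filter ℕ) (nhds s)) :
    ∃ g : (Fin n → ℝ) → ℕ → X,
      (g (fun _ => 0) = fun m => f m (fun _ => 0)) ∧
      ∀ t u : Fin n → ℝ, (∀ i, t i ∈ Set.Icc (0 : ℝ) s) → (∀ i, u i ∈ Set.Icc (0 : ℝ) s) →
        Tendsto (fun m => dist (g t m) (g u m) / d m) (ω : Filter ℕ)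
          (nhds (∑ i, |t i - u i|)) := by
  set ε : ℕ → ℝ := fun m => C m / d m
  have hε : ∀ m, 0 < ε m := fun m => div_pos (one_pos.trans_le (hC m)) (hd m)
  have hεk : Tendsto (fun m => ε m * k m) ω (𝓝 s) :=
    hlim.congr fun m => (div_mul_eq_mul_div ..).symm
  have hε0 : Tendsto ε ω (𝓝 0) := tendsto_nhds_zero_of_mul_tendsto_atTop hεk hk
  refine ⟨fun t m => f m fun i => clampedFloor (k m) (t i / ε m), ?_, fun t u ht hu => ?_⟩
  · simp only [zero_div, clampedFloor_zero]
  · simp_rw [hcube, mul_sum_abs_sub_div _ (hε _).le]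
    exact tendsto_finsetSum _ fun i _ =>
      ((tendsto_mul_clampedFloor_div hε hε0 hεk (ht i)).sub
        (tendsto_mul_clampedFloor_div hε hε0 hεk (hu i))).abs

/-- A sequence of `n`-dimensional dilated cubes of sizes `k m` with dilatation constants
`C m`, with `lim_ω k_m = ∞` and `lim_ω C_m k_m / d_m = s < ∞`, yields an isometric copy of
the cube `[0,s]^n` (with the `ℓ¹`-metric) in the asymptotic cone `Cone_ω(X, c, d)` with
basepoints `c = (f_m(0))`; the copy is given at the level of representative sequences. -/
theorem cube_in_asymptotic_cone {X : Type*} [PseudoMetricSpace X] (n : ℕ)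
    (ω : Ultrafilter ℕ) (hω : (ω : Filter ℕ) ≤ cofinite)
    (k : ℕ → ℕ) (C : ℕ → ℝ) (hC : ∀ m, 1 ≤ C m)
    (f : ∀ m, (Fin n → Fin (k m + 1)) → X)
    (hcube : ∀ m (a b : Fin n → Fin (k m + 1)),
      dist (f m a) (f m b) = C m * ∑ i, |((a i : ℕ) : ℝ) - ((b i : ℕ) : ℝ)|)
    (hk : Tendsto (fun m => ((k m : ℕ) : ℝ)) (ω : Filter ℕ) atTop)
    (d : ℕ → ℝ) (hd : ∀ m, 0 < d m) (hdiv : Tendsto d (ω : Filter ℕ) atTop)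
    (s : ℝ) (hs : 0 ≤ s)
    (hlim : Tendsto (fun m => C m * (k m : ℝ) / d m) (ω : Filter ℕ) (nhds s)) :
    ∃ g : (Fin n → ℝ) → ℕ → X,
      (g (fun _ => 0) = fun m => f m (fun _ => 0)) ∧
      ∀ t u : Fin n → ℝ, (∀ i, t i ∈ Set.Icc (0 : ℝ) s) → (∀ i, u i ∈ Set.Icc (0 : ℝ) s) →
        Tendsto (fun m => dist (g t m) (g u m) / d m) (ω : Filter ℕ)
          (nhds (∑ i, |t i - u i|)) :=
  cube_in_asymptotic_cone_general n ω k C hC f hcube hk d hd s hlim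
end

section
/- If a metric space (X, d_X) contains a sequence of n-dimensional dilated cubes f_m: {0,1,...,k_m}ⁿ → X with k_m → ∞, then the asymptotic Assouad-Nagata dimension of (X, d_X) is at least n. -/
open Filter

/-!
If `X` had asymptotic Assouad–Nagata dimension `m < n`, take a dilated cube
`f : {0, …, K}ⁿ → X` with constant `C ≥ 1` and `K` large, and the cover of `X` by `m + 1 ≤ n`
colour classes at scale `s = (n + 1) C`. Two vertices of a simplex of the Kuhn triangulation of
`[0, K]ⁿ` are at distance at most `n C < s`, and the `s`-chain components of the colour classes
have diameter at most `C' s + b < C K`, so no component of the pulled-back colouring joins two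
opposite faces `x t = 0` and `x t = K`.

This contradicts a Lebesgue covering lemma for the grid. Label a grid point `t + 1` if its
component misses the face `x t = 0` (for some such `t`), and `0` if it meets all of them. Points
on `x t = 0` never get the label `t + 1`, and points on `x t = K` never get the label `0` since
no component joins the two faces, so by Sperner's lemma some Kuhn simplex carries all `n + 1`
labels. But two of its `n + 1` vertices share a colour, hence a component, hence a label.

Sperner's lemma is proved by induction on `n` by counting, modulo `2`, the facets that carry the
labels `0, …, n`: a simplex has an odd number of them iff it carries all labels, the interior
ones come in pairs of adjacent simplices, and the boundary ones are exactly the rainbow simplices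
of the face `x n = 0`.
-/

open Finset Equiv Function

lemma Finset.le_card_of_forall_lt_exists_mem {ι : Type*} {s : Finset ι} {l : ι → ℕ} {M : ℕ}
    (h : ∀ b < M, ∃ t ∈ s, l t = b) : M ≤ #s :=
  calc M = #(range M) := (card_range M).symm
    _ ≤ #(s.image l) := card_le_card fun b hb => by
        obtain ⟨t, ht, rfl⟩ := h b (mem_range.1 hb)
        exact mem_image_of_mem l ht
    _ ≤ #s := card_image_le

lemma Finset.even_card_of_involution {ι : Type*} {s : Finset ι} (g : ι → ι)
    (hmem : ∀ a ∈ s, g a ∈ s) (hne : ∀ a ∈ s, g a ≠ a) (hinv : ∀ a ∈ s, g (g a) = a) :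
    Even #s := by
  rw [← ZMod.natCast_eq_zero_iff_even, card_eq_sum_ones, Nat.cast_sum, Nat.cast_one]
  exact sum_involution (fun a _ => g a) (fun _ _ => by decide) (fun a ha _ => hne a ha)
    (fun a ha => hmem a ha) (fun a ha => hinv a ha)

/-- The facet opposite to vertex `j` of a simplex with vertex labels `l` carries the labels
`0, …, N - 1`. -/
def IsFullFacet {N : ℕ} (l : Fin (N + 1) → ℕ) (j : Fin (N + 1)) : Prop :=
  ∀ b < N, ∃ t ≠ j, l t = b

section IsFullFacet

variable {N : ℕ} {l : Fin (N + 1) → ℕ} {j : Fin (N + 1)}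

lemma isFullFacet_iff_eq (hall : ∀ b ≤ N, ∃ t, l t = b) {j₀ : Fin (N + 1)} (hj₀ : l j₀ = N) :
    IsFullFacet l j ↔ j = j₀ := by
  refine ⟨fun hj => by_contra fun hne => ?_, ?_⟩
  · -- removing `j` would leave all `N + 1` labels on `N` vertices
    have := le_card_of_forall_lt_exists_mem (s := univ.erase j) (l := l) (M := N + 1)
      fun b hb => ?_
    · simp at this
    rcases (Nat.lt_succ_iff.1 hb).lt_or_eq with hb | rfl
    · obtain ⟨t, htj, ht⟩ := hj b hb
      exact ⟨t, mem_erase.2 ⟨htj, mem_univ _⟩, ht⟩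
    · exact ⟨j₀, mem_erase.2 ⟨Ne.symm hne, mem_univ _⟩, hj₀⟩
  · rintro rfl b hb
    obtain ⟨t, ht⟩ := hall b hb.le
    exact ⟨t, by rintro rfl; omega, ht⟩

lemma isFullFacet_iff_eq_or_eq (hcov : ∀ b < N, ∃ t, l t = b) {t₁ t₂ : Fin (N + 1)}
    (hne : t₁ ≠ t₂) (heq : l t₁ = l t₂) : IsFullFacet l j ↔ j = t₁ ∨ j = t₂ := by
  refine ⟨fun hj => by_contra fun hj' => ?_, ?_⟩
  · -- removing `j` and `t₂` would leave all `N` labels on `N - 1` vertices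
    push Not at hj'
    have := le_card_of_forall_lt_exists_mem (s := (univ.erase j).erase t₂) (l := l) (M := N)
      fun b hb => ?_
    · have h2 := card_le_univ ({t₁, t₂} : Finset (Fin (N + 1)))
      rw [card_pair hne, Fintype.card_fin] at h2
      rw [card_erase_of_mem (by simp [Ne.symm hj'.2]), card_erase_of_mem (mem_univ _),
        card_univ, Fintype.card_fin] at this
      omega
    obtain ⟨t, htj, ht⟩ := hj b hb
    by_cases ht₂ : t = t₂
    · exact ⟨t₁, by simp [hne, hj'.1.symm], by rw [heq, ← ht₂, ht]⟩
    · exact ⟨t, by simp [ht₂, htj], ht⟩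
  · rintro (rfl | rfl) b hb <;> obtain ⟨t, ht⟩ := hcov b hb <;> by_cases htj : t = j
    · exact ⟨t₂, hne.symm, by rw [← heq, ← htj, ht]⟩
    · exact ⟨t, htj, ht⟩
    · exact ⟨t₁, hne, by rw [heq, ← htj, ht]⟩
    · exact ⟨t, htj, ht⟩

open scoped Classical in
lemma card_isFullFacet (l : Fin (N + 1) → ℕ) (hl : ∀ t, l t ≤ N) :
    (#{j | IsFullFacet l j} : ZMod 2) = if ∀ b ≤ N, ∃ t, l t = b then 1 else 0 := by
  split_ifs with hall
  · obtain ⟨j₀, hj₀⟩ := hall N le_rfl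
    have : ({j | IsFullFacet l j} : Finset _) = {j₀} := by
      ext; simp [isFullFacet_iff_eq hall hj₀]
    simp [this]
  by_cases hcov : ∀ b < N, ∃ t, l t = b
  · have hlt (t : Fin (N + 1)) : l t < N := (hl t).lt_of_ne fun h => hall fun b hb =>
      hb.lt_or_eq.elim (hcov b) fun hbN => ⟨t, by omega⟩
    obtain ⟨t₁, t₂, hne, heq⟩ :=
      Fintype.exists_ne_map_eq_of_card_lt (fun t => (⟨l t, hlt t⟩ : Fin N)) (by simp)
    have : ({j | IsFullFacet l j} : Finset _) = {t₁, t₂} := by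
      ext; simp [isFullFacet_iff_eq_or_eq hcov hne (congrArg Fin.val heq)]
    rw [this, card_pair hne]
    decide
  · push Not at hcov
    obtain ⟨b, hb, hmiss⟩ := hcov
    rw [filter_false_of_mem fun j _ hj => ?_, card_empty, Nat.cast_zero]
    obtain ⟨t, -, ht⟩ := hj b hb
    exact hmiss t ht

end IsFullFacet

lemma finRotate_symm_zero (n : ℕ) : (finRotate (n + 1)).symm 0 = Fin.last n := by
  rw [symm_apply_eq, finRotate_last]

namespace Equiv.Perm

variable {n : ℕ}

def extendLast (σ : Perm (Fin n)) : Perm (Fin (n + 1)) :=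
  finSuccEquivLast.permCongr.symm σ.optionCongr

def restrictLast (π : Perm (Fin (n + 1))) : Perm (Fin n) :=
  removeNone (finSuccEquivLast.permCongr π)

@[simp] lemma extendLast_castSucc (σ : Perm (Fin n)) (i : Fin n) :
    extendLast σ i.castSucc = (σ i).castSucc := by
  simp [extendLast, finSuccEquivLast_castSucc]

@[simp] lemma extendLast_last (σ : Perm (Fin n)) : extendLast σ (Fin.last n) = Fin.last n := by
  simp [extendLast]

lemma extendLast_symm (σ : Perm (Fin n)) : (extendLast σ).symm = extendLast σ.symm := by
  ext i : 1
  rw [symm_apply_eq]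
  induction i using Fin.lastCases <;> simp

lemma restrictLast_extendLast (σ : Perm (Fin n)) : restrictLast (extendLast σ) = σ := by
  rw [restrictLast, extendLast, apply_symm_apply, removeNone_optionCongr]

lemma extendLast_restrictLast {π : Perm (Fin (n + 1))} (h : π (Fin.last n) = Fin.last n) :
    extendLast (restrictLast π) = π := by
  have : finSuccEquivLast.permCongr π none = none := by simp [h]
  rw [extendLast, restrictLast, map_equiv_removeNone, this, swap_self, ← Perm.one_def, one_mul,
    symm_apply_apply]

end Equiv.Perm

namespace Kuhn

/-- `(x, σ)` is the simplex of the Kuhn triangulation of `[0, k]ⁿ` with vertices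
`x + e (σ 0) + ⋯ + e (σ (j - 1))`, `0 ≤ j ≤ n`. -/
abbrev Cell (n k : ℕ) := (Fin n → Fin k) × Perm (Fin n)

variable {n k : ℕ}

def vertex (c : Cell n k) (j : ℕ) : Fin n → Fin (k + 1) :=
  fun i => ⟨c.1 i + if (c.2.symm i : ℕ) < j then 1 else 0, by split <;> omega⟩

lemma val_vertex (c : Cell n k) (j : ℕ) (i : Fin n) :
    (vertex c j i : ℕ) = c.1 i + if (c.2.symm i : ℕ) < j then 1 else 0 := rfl

lemma abs_vertex_sub_vertex_le (c : Cell n k) (j j' : ℕ) (i : Fin n) :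
    |((vertex c j i : ℕ) : ℝ) - (vertex c j' i : ℕ)| ≤ 1 := by
  simp only [val_vertex]
  split_ifs <;> norm_num

def IsRainbow (lab : (Fin n → Fin (k + 1)) → ℕ) (c : Cell n k) : Prop :=
  ∀ b ≤ n, ∃ j : Fin (n + 1), lab (vertex c j) = b

lemma IsRainbow.injective {lab : (Fin n → Fin (k + 1)) → ℕ} (hle : ∀ v, lab v ≤ n)
    {c : Cell n k} (hc : IsRainbow lab c) : Injective fun j : Fin (n + 1) => lab (vertex c j) := by
  let l : Fin (n + 1) → Fin (n + 1) := fun j => ⟨lab (vertex c j), Nat.lt_succ_of_le (hle _)⟩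
  have hl : Surjective l := fun b => by
    obtain ⟨j, hj⟩ := hc b b.is_le
    exact ⟨j, Fin.ext hj⟩
  exact fun j₁ j₂ h => Finite.injective_iff_surjective.2 hl (Fin.ext h)

structure IsSpernerLabeling (lab : (Fin n → Fin (k + 1)) → ℕ) : Prop where
  le : ∀ v, lab v ≤ n
  ne_succ : ∀ v (i : Fin n), v i = 0 → lab v ≠ (i : ℕ) + 1
  ne_zero : ∀ v (i : Fin n), v i = Fin.last k → lab v ≠ 0

lemma IsSpernerLabeling.snoc_zero {lab : (Fin (n + 1) → Fin (k + 1)) → ℕ}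
    (hlab : IsSpernerLabeling lab) : IsSpernerLabeling fun v => lab (Fin.snoc v 0) where
  le v := by
    have := hlab.ne_succ (Fin.snoc v 0) (Fin.last n) (by simp)
    have := hlab.le (Fin.snoc v 0)
    simp only [Fin.val_last] at *
    omega
  ne_succ v i hi := hlab.ne_succ _ i.castSucc (by simpa using hi)
  ne_zero v i hi := hlab.ne_zero _ i.castSucc (by simpa using hi)

section Neighbor

def up (c : Cell (n + 1) k) (h : (c.1 (c.2 0) : ℕ) + 1 < k) : Cell (n + 1) k :=
  (update c.1 (c.2 0) ⟨c.1 (c.2 0) + 1, h⟩, (finRotate (n + 1)).trans c.2)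

def down (c : Cell (n + 1) k) (h : 0 < (c.1 (c.2 (Fin.last n)) : ℕ)) : Cell (n + 1) k :=
  (update c.1 (c.2 (Fin.last n)) ⟨c.1 (c.2 (Fin.last n)) - 1, by omega⟩,
    (finRotate (n + 1)).symm.trans c.2)

lemma val_up_last (c : Cell (n + 1) k) (h : (c.1 (c.2 0) : ℕ) + 1 < k) :
    ((up c h).1 ((up c h).2 (Fin.last n)) : ℕ) = c.1 (c.2 0) + 1 := by
  simp [up]

lemma val_down_zero (c : Cell (n + 1) k) (h : 0 < (c.1 (c.2 (Fin.last n)) : ℕ)) :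
    ((down c h).1 ((down c h).2 0) : ℕ) = c.1 (c.2 (Fin.last n)) - 1 := by
  simp only [down, trans_apply, finRotate_symm_zero n, update_self]

lemma down_up (c : Cell (n + 1) k) (h : (c.1 (c.2 0) : ℕ) + 1 < k) :
    down (up c h) (by rw [val_up_last]; omega) = c := by
  ext i : 2
  · by_cases hi : i = c.2 0 <;> simp [down, up, hi]
  · simp [down, up]

lemma up_down (c : Cell (n + 1) k) (h : 0 < (c.1 (c.2 (Fin.last n)) : ℕ)) :
    up (down c h) (by rw [val_down_zero]; omega) = c := by
  ext i : 2
  · simp only [up, down, trans_apply, finRotate_symm_zero n, update_self]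
    by_cases hi : i = c.2 (Fin.last n)
    · subst hi
      ext
      simp only [update_self, Fin.val_mk]
      omega
    · simp only [update_of_ne hi]
  · simp [down, up]

lemma vertex_up (c : Cell (n + 1) k) (h : (c.1 (c.2 0) : ℕ) + 1 < k) {t : ℕ} (ht : t ≤ n) :
    vertex (up c h) t = vertex c (t + 1) := by
  ext i
  simp only [val_vertex, up, symm_trans_apply]
  by_cases hi : i = c.2 0
  · subst hi
    simp only [update_self, symm_apply_apply, finRotate_symm_zero n, Fin.val_last, Fin.val_zero]
    split_ifs <;> omega
  · have h0 : c.2.symm i ≠ 0 := fun h0 => hi (by rw [← h0, apply_symm_apply])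
    have h0' : (c.2.symm i : ℕ) ≠ 0 := Fin.val_ne_zero_iff.2 h0
    simp only [update_of_ne hi, coe_finRotate_symm_of_ne_zero h0]
    split_ifs <;> omega

lemma vertex_down (c : Cell (n + 1) k) (h : 0 < (c.1 (c.2 (Fin.last n)) : ℕ)) {t : ℕ}
    (ht : t ≤ n) : vertex (down c h) (t + 1) = vertex c t := by
  conv_rhs => rw [← up_down c h, vertex_up _ _ ht]

lemma vertex_swap (c : Cell n k) {a b : Fin n} (hab : (a : ℕ) + 1 = b) {t : ℕ} (ht : t ≠ b) :
    vertex (c.1, (swap a b).trans c.2) t = vertex c t := by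
  ext i
  simp only [val_vertex, symm_trans_apply, symm_swap]
  congr 1
  rcases eq_or_ne (c.2.symm i) a with h | h
  · simp only [h, swap_apply_left]; split_ifs <;> omega
  rcases eq_or_ne (c.2.symm i) b with h' | h'
  · simp only [h', swap_apply_right]; split_ifs <;> omega
  · simp only [swap_apply_of_ne_of_ne h h']

/-- `(c, j)` is the facet of `c` opposite to its vertex `j`. -/
abbrev Facet (n k : ℕ) := Cell (n + 1) k × Fin (n + 2)

def IsFull (lab : (Fin (n + 1) → Fin (k + 1)) → ℕ) (p : Facet n k) : Prop :=
  IsFullFacet (fun t : Fin (n + 2) => lab (vertex p.1 t)) p.2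

/-- The facets lying in the boundary of `[0, k]ⁿ⁺¹`. -/
def IsBoundary (p : Facet n k) : Prop :=
  p.2 = 0 ∧ (p.1.1 (p.1.2 0) : ℕ) + 1 = k ∨
    p.2 = Fin.last (n + 1) ∧ (p.1.1 (p.1.2 (Fin.last n)) : ℕ) = 0

/-- The same facet, seen from the other simplex containing it: across vertex `0` the base moves
up in direction `σ 0` and `σ` is rotated, across vertex `n + 1` this is undone, and across an
inner vertex `j` the steps `j - 1` and `j` of `σ` are swapped. -/
def neighbor (p : Facet n k) : Facet n k :=
  if hj : p.2 = 0 then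
    if h : (p.1.1 (p.1.2 0) : ℕ) + 1 < k then (up p.1 h, Fin.last (n + 1)) else p
  else if hj' : p.2 = Fin.last (n + 1) then
    if h : 0 < (p.1.1 (p.1.2 (Fin.last n)) : ℕ) then (down p.1 h, 0) else p
  else ((p.1.1, (swap (p.2.pred hj) (p.2.castPred hj')).trans p.1.2), p.2)

lemma neighbor_zero {c : Cell (n + 1) k} (h : (c.1 (c.2 0) : ℕ) + 1 < k) :
    neighbor (c, 0) = (up c h, Fin.last (n + 1)) := by
  simp [neighbor, h]

lemma neighbor_last {c : Cell (n + 1) k} (h : 0 < (c.1 (c.2 (Fin.last n)) : ℕ)) :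
    neighbor (c, Fin.last (n + 1)) = (down c h, 0) := by
  simp [neighbor, h]

lemma neighbor_of_ne {c : Cell (n + 1) k} {j : Fin (n + 2)} (hj : j ≠ 0)
    (hj' : j ≠ Fin.last (n + 1)) :
    neighbor (c, j) = ((c.1, (swap (j.pred hj) (j.castPred hj')).trans c.2), j) := by
  simp [neighbor, hj, hj']

lemma neighbor_cases {p : Facet n k} (hp : ¬IsBoundary p) :
    (∃ h, p.2 = 0 ∧ neighbor p = (up p.1 h, Fin.last (n + 1))) ∨
    (∃ h, p.2 = Fin.last (n + 1) ∧ neighbor p = (down p.1 h, 0)) ∨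
    (∃ (hj : p.2 ≠ 0) (hj' : p.2 ≠ Fin.last (n + 1)),
      neighbor p = ((p.1.1, (swap (p.2.pred hj) (p.2.castPred hj')).trans p.1.2), p.2)) := by
  unfold IsBoundary at hp
  by_cases hj : p.2 = 0
  · have h : (p.1.1 (p.1.2 0) : ℕ) + 1 < k := by have := (p.1.1 (p.1.2 0)).isLt; omega
    exact .inl ⟨h, hj, by rw [← neighbor_zero h, ← hj]⟩
  by_cases hj' : p.2 = Fin.last (n + 1)
  · have h : 0 < (p.1.1 (p.1.2 (Fin.last n)) : ℕ) := by omega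
    exact .inr (.inl ⟨h, hj', by rw [← neighbor_last h, ← hj']⟩)
  exact .inr (.inr ⟨hj, hj', neighbor_of_ne hj hj'⟩)

variable {p : Facet n k}

lemma not_isBoundary_neighbor (hp : ¬IsBoundary p) : ¬IsBoundary (neighbor p) := by
  rcases neighbor_cases hp with ⟨h, -, he⟩ | ⟨h, -, he⟩ | ⟨hj, hj', he⟩ <;>
    rw [he] <;> unfold IsBoundary
  · simp [val_up_last]
  · have := (p.1.1 (p.1.2 (Fin.last n))).isLt
    simp only [val_down_zero, Fin.zero_eq_last_iff]
    omega
  · simp [hj, hj']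

lemma neighbor_neighbor (hp : ¬IsBoundary p) : neighbor (neighbor p) = p := by
  rcases neighbor_cases hp with ⟨h, hj, he⟩ | ⟨h, hj, he⟩ | ⟨hj, hj', he⟩ <;> rw [he]
  · rw [neighbor_last (by rw [val_up_last]; omega), down_up, ← hj]
  · rw [neighbor_zero (by rw [val_down_zero]; omega), up_down, ← hj]
  · rw [neighbor_of_ne hj hj']
    ext1
    · ext i <;> simp
    · rfl

lemma neighbor_ne (hp : ¬IsBoundary p) : neighbor p ≠ p := by
  rcases neighbor_cases hp with ⟨h, hj, he⟩ | ⟨h, hj, he⟩ | ⟨hj, hj', he⟩ <;>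
    rw [he] <;> intro hfix
  · exact absurd (congrArg Prod.snd hfix) (by simp [hj])
  · exact absurd (congrArg Prod.snd hfix) (by simp [hj])
  · have h := congrArg (fun q : Facet n k => q.1.2 (p.2.pred hj)) hfix
    simp only [trans_apply, swap_apply_left] at h
    have hval := congrArg Fin.val (p.1.2.injective h)
    have : (p.2 : ℕ) ≠ 0 := fun h => hj (Fin.ext h)
    simp only [Fin.coe_castPred, Fin.val_pred] at hval
    omega

lemma exists_vertex_neighbor (hp : ¬IsBoundary p) {t : Fin (n + 2)} (ht : t ≠ p.2) :
    ∃ t' ≠ (neighbor p).2, vertex (neighbor p).1 t' = vertex p.1 t := by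
  rcases neighbor_cases hp with ⟨h, hj, he⟩ | ⟨h, hj, he⟩ | ⟨hj, hj', he⟩ <;> rw [he]
  · have ht0 : t ≠ 0 := hj ▸ ht
    refine ⟨(t.pred ht0).castSucc, Fin.castSucc_ne_last _, ?_⟩
    have : (t : ℕ) ≠ 0 := fun h => ht0 (Fin.ext h)
    rw [Fin.val_castSucc, vertex_up _ _ (t.pred ht0).is_le, Fin.val_pred,
      Nat.sub_add_cancel (by omega)]
  · have htl : t ≠ Fin.last (n + 1) := hj ▸ ht
    refine ⟨(t.castPred htl).succ, Fin.succ_ne_zero _, ?_⟩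
    rw [Fin.val_succ, vertex_down _ _ (t.castPred htl).is_le]
    rfl
  · have : (p.2 : ℕ) ≠ 0 := fun h => hj (Fin.ext h)
    refine ⟨t, ht, vertex_swap _ (by simp only [Fin.val_pred, Fin.coe_castPred]; omega) ?_⟩
    rw [Fin.coe_castPred]
    exact Fin.val_ne_iff.2 ht

lemma isFull_neighbor {lab : (Fin (n + 1) → Fin (k + 1)) → ℕ} (hp : ¬IsBoundary p)
    (hfull : IsFull lab p) : IsFull lab (neighbor p) := by
  intro b hb
  obtain ⟨t, ht, rfl⟩ := hfull b hb
  obtain ⟨t', ht', hv⟩ := exists_vertex_neighbor hp ht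
  exact ⟨t', ht', by simp only [hv]⟩

end Neighbor

section Count

open scoped Classical

lemma card_isFull_eq_card_isRainbow (lab : (Fin (n + 1) → Fin (k + 1)) → ℕ)
    (hle : ∀ v, lab v ≤ n + 1) :
    (#{p : Facet n k | IsFull lab p} : ZMod 2) = #{c : Cell (n + 1) k | IsRainbow lab c} := by
  have hcell (c : Cell (n + 1) k) :
      (#{j | IsFull lab (c, j)} : ZMod 2) = if IsRainbow lab c then 1 else 0 := by
    convert card_isFullFacet (fun t : Fin (n + 2) => lab (vertex c t)) fun _ => hle _ <;>
      exact Iff.rfl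
  calc (#{p : Facet n k | IsFull lab p} : ZMod 2)
      = ∑ c : Cell (n + 1) k, (#{j | IsFull lab (c, j)} : ZMod 2) := by
        simp only [card_filter, Fintype.sum_prod_type, Nat.cast_sum]
    _ = #{c : Cell (n + 1) k | IsRainbow lab c} := by
        simp only [hcell, sum_boole]

lemma card_isFull_eq_card_isFull_isBoundary (lab : (Fin (n + 1) → Fin (k + 1)) → ℕ) :
    (#{p : Facet n k | IsFull lab p} : ZMod 2) =
      #{p : Facet n k | IsFull lab p ∧ IsBoundary p} := by
  have heven : Even #{p : Facet n k | IsFull lab p ∧ ¬IsBoundary p} := by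
    refine even_card_of_involution neighbor (fun p hp => ?_) (fun p hp => neighbor_ne ?_)
      (fun p hp => neighbor_neighbor ?_) <;>
      simp only [mem_filter, mem_univ, true_and] at hp ⊢
    · exact ⟨isFull_neighbor hp.2 hp.1, not_isBoundary_neighbor hp.2⟩
    all_goals exact hp.2
  rw [← card_filter_add_card_filter_not (s := {p : Facet n k | IsFull lab p}) IsBoundary,
    filter_filter, filter_filter, Nat.cast_add, heven.natCast_zmod_two, add_zero]

end Count

section Face

def liftCell (hk : 0 < k) (c : Cell n k) : Cell (n + 1) k :=
  (Fin.snoc c.1 ⟨0, hk⟩, c.2.extendLast)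

def restrictCell (c : Cell (n + 1) k) : Cell n k :=
  (Fin.init c.1, c.2.restrictLast)

variable (hk : 0 < k)

lemma restrictCell_liftCell (c : Cell n k) : restrictCell (liftCell hk c) = c := by
  simp [restrictCell, liftCell, Perm.restrictLast_extendLast]

lemma liftCell_restrictCell {c : Cell (n + 1) k} (hσ : c.2 (Fin.last n) = Fin.last n)
    (hx : (c.1 (Fin.last n) : ℕ) = 0) : liftCell hk (restrictCell c) = c := by
  refine Prod.ext ?_ (Perm.extendLast_restrictLast hσ)
  change Fin.snoc (Fin.init c.1) ⟨0, hk⟩ = c.1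
  rw [show (⟨0, hk⟩ : Fin k) = c.1 (Fin.last n) from Fin.ext hx.symm, Fin.snoc_init_self]

lemma vertex_liftCell (c : Cell n k) {t : ℕ} (ht : t ≤ n) :
    vertex (liftCell hk c) t = Fin.snoc (vertex c t) 0 := by
  ext i
  induction i using Fin.lastCases with
  | last =>
    simp only [val_vertex, liftCell, Perm.extendLast_symm, Fin.snoc_last, Perm.extendLast_last,
      Fin.val_last, Fin.val_zero]
    split_ifs <;> omega
  | cast i => simp [val_vertex, liftCell, Perm.extendLast_symm]

lemma isFull_liftCell_iff (lab : (Fin (n + 1) → Fin (k + 1)) → ℕ) (c : Cell n k) :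
    IsFull lab (liftCell hk c, Fin.last (n + 1)) ↔ IsRainbow (fun v => lab (Fin.snoc v 0)) c := by
  refine ⟨fun h b hb => ?_, fun h b hb => ?_⟩
  · obtain ⟨t, ht, hlab⟩ := h b (Nat.lt_succ_of_le hb)
    refine ⟨t.castPred ht, ?_⟩
    dsimp only at hlab ⊢
    rwa [← vertex_liftCell hk c (t.castPred ht).is_le, Fin.coe_castPred]
  · obtain ⟨j, hlab⟩ := h b (Nat.le_of_lt_succ hb)
    refine ⟨j.castSucc, Fin.castSucc_ne_last j, ?_⟩
    dsimp only at hlab ⊢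
    rwa [← vertex_liftCell hk c j.is_le] at hlab

lemma eq_liftCell_of_isFull_of_isBoundary {lab : (Fin (n + 1) → Fin (k + 1)) → ℕ}
    (hlab : IsSpernerLabeling lab) {p : Facet n k} (hfull : IsFull lab p)
    (hbd : IsBoundary p) : p = (liftCell hk (restrictCell p.1), Fin.last (n + 1)) := by
  obtain ⟨hj, hx⟩ | ⟨hj, hx⟩ := hbd
  · -- the facet lies in the face `x (σ 0) = k`, which carries no label `0`
    obtain ⟨t, ht, hlab0⟩ := hfull 0 n.succ_pos
    refine absurd hlab0 (hlab.ne_zero _ (p.1.2 0) ?_)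
    ext
    simp [val_vertex, Fin.pos_iff_ne_zero.2 (hj ▸ ht), hx]
  · have hσ : p.1.2 (Fin.last n) = Fin.last n := by
      -- otherwise the facet lies in a face `x i = 0` with `i < n`, which carries no label `i + 1`
      by_contra hne
      have hlt : (p.1.2 (Fin.last n) : ℕ) < n := Fin.val_lt_last hne
      obtain ⟨t, ht, hlabi⟩ := hfull (p.1.2 (Fin.last n) + 1) (by omega)
      refine absurd hlabi (hlab.ne_succ _ _ ?_)
      have : (t : ℕ) ≤ n := (t.castPred (hj ▸ ht)).is_le
      ext
      simp only [val_vertex, symm_apply_apply, Fin.val_last, hx, Fin.val_zero]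
      split_ifs <;> omega
    rw [liftCell_restrictCell hk hσ (hσ ▸ hx), ← hj]

end Face

open scoped Classical in
lemma card_isFull_isBoundary (hk : 0 < k) {lab : (Fin (n + 1) → Fin (k + 1)) → ℕ}
    (hlab : IsSpernerLabeling lab) :
    #{p : Facet n k | IsFull lab p ∧ IsBoundary p} =
      #{c : Cell n k | IsRainbow (fun v => lab (Fin.snoc v 0)) c} := by
  refine card_nbij' (fun p => restrictCell p.1) (fun c => (liftCell hk c, Fin.last (n + 1)))
    (fun p hp => ?_) (fun c hc => ?_) (fun p hp => ?_) (fun c _ => restrictCell_liftCell hk c)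
  all_goals simp only [mem_coe, mem_filter, mem_univ, true_and] at *
  · rw [← isFull_liftCell_iff hk, ← eq_liftCell_of_isFull_of_isBoundary hk hlab hp.1 hp.2]
    exact hp.1
  · exact ⟨(isFull_liftCell_iff hk lab c).2 hc, .inr ⟨rfl, by simp [liftCell]⟩⟩
  · exact (eq_liftCell_of_isFull_of_isBoundary hk hlab hp.1 hp.2).symm

open scoped Classical in
theorem odd_card_isRainbow (hk : 0 < k) {n : ℕ} {lab : (Fin n → Fin (k + 1)) → ℕ}
    (hlab : IsSpernerLabeling lab) : Odd #{c : Cell n k | IsRainbow lab c} := by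
  induction n with
  | zero =>
    rw [filter_true_of_mem fun c _ b hb =>
      ⟨0, by have := hlab.le (vertex c (0 : Fin 1)); omega⟩]
    simp
  | succ n ih =>
    rw [← ZMod.natCast_eq_one_iff_odd, ← card_isFull_eq_card_isRainbow lab hlab.le,
      card_isFull_eq_card_isFull_isBoundary, card_isFull_isBoundary hk hlab,
      ZMod.natCast_eq_one_iff_odd]
    exact ih hlab.snoc_zero

end Kuhn

open scoped Classical in
noncomputable def faceLabel {n k : ℕ} (S : Set (Fin n → Fin (k + 1))) : ℕ :=
  if h : ∃ t : Fin n, ∀ w ∈ S, w t ≠ 0 then h.choose + 1 else 0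

section faceLabel

variable {n k : ℕ} {S : Set (Fin n → Fin (k + 1))}

lemma faceLabel_le (S : Set (Fin n → Fin (k + 1))) : faceLabel S ≤ n := by
  unfold faceLabel
  split_ifs with h
  · exact h.choose.isLt
  · exact n.zero_le

lemma faceLabel_ne_succ {v : Fin n → Fin (k + 1)} (hv : v ∈ S) {t : Fin n} (ht : v t = 0) :
    faceLabel S ≠ (t : ℕ) + 1 := by
  unfold faceLabel
  split_ifs with h
  · intro he
    have hspec := h.choose_spec
    rw [show h.choose = t from Fin.ext (Nat.succ_injective he)] at hspec
    exact hspec v hv ht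
  · exact (Nat.succ_ne_zero _).symm

lemma faceLabel_ne_zero {t : Fin n} (h : ∀ w ∈ S, w t ≠ 0) : faceLabel S ≠ 0 := by
  rw [faceLabel, dif_pos ⟨t, h⟩]
  exact Nat.succ_ne_zero _

end faceLabel

open scoped Classical in
theorem exists_fiber_meets_opposite_faces {α : Type*} {n k : ℕ} (hk : 0 < k)
    (κ : (Fin n → Fin (k + 1)) → α)
    (hκ : ∀ c : Kuhn.Cell n k, ∃ j₁ j₂ : Fin (n + 1), j₁ ≠ j₂ ∧
      κ (Kuhn.vertex c j₁) = κ (Kuhn.vertex c j₂)) :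
    ∃ v w t, κ v = κ w ∧ v t = 0 ∧ w t = Fin.last k := by
  by_contra! h
  let lab v := faceLabel {w | κ w = κ v}
  have hlab : Kuhn.IsSpernerLabeling lab :=
    { le := fun _ => faceLabel_le _
      ne_succ := fun v _ hi => faceLabel_ne_succ (S := {w | κ w = κ v}) rfl hi
      ne_zero := fun v i hi => faceLabel_ne_zero fun w hw hw0 => h w v i hw hw0 hi }
  obtain ⟨c, hc⟩ := card_pos.1 (Kuhn.odd_card_isRainbow hk hlab).pos
  obtain ⟨j₁, j₂, hne, heq⟩ := hκ c
  exact hne ((mem_filter.1 hc).2.injective hlab.le (by simp only [lab, heq]))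

namespace ScaleChain

variable {X : Type*} {d : X → X → ℝ} {s : ℝ} {U : Set X} {x y z : X}

lemma refl (hx : x ∈ U) : ScaleChain d s U x x :=
  ⟨0, fun _ => x, rfl, rfl, fun _ _ => hx, fun _ h => absurd h (Nat.not_lt_zero _)⟩

lemma of_lt (hx : x ∈ U) (hy : y ∈ U) (h : d x y < s) : ScaleChain d s U x y := by
  refine ⟨1, fun i => if i = 0 then x else y, rfl, rfl, fun i _ => ?_, fun i hi => ?_⟩
  · dsimp only
    split_ifs <;> assumption
  · obtain rfl : i = 0 := by omega
    simpa using h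

lemma symm (hd : ∀ a b, d a b = d b a) (h : ScaleChain d s U x y) : ScaleChain d s U y x := by
  obtain ⟨m, c, rfl, rfl, hmem, hstep⟩ := h
  refine ⟨m, fun i => c (m - i), by simp, by simp, fun i _ => hmem _ (Nat.sub_le _ _),
    fun i hi => ?_⟩
  have := hstep (m - (i + 1)) (by omega)
  rwa [hd, show m - (i + 1) + 1 = m - i by omega] at this

lemma trans (hxy : ScaleChain d s U x y) (hyz : ScaleChain d s U y z) :
    ScaleChain d s U x z := by
  obtain ⟨m₁, c₁, rfl, rfl, hmem₁, hstep₁⟩ := hxy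
  obtain ⟨m₂, c₂, h₂, rfl, hmem₂, hstep₂⟩ := hyz
  refine ⟨m₁ + m₂, fun i => if i ≤ m₁ then c₁ i else c₂ (i - m₁), by simp, ?_,
    fun i hi => ?_, fun i hi => ?_⟩ <;> dsimp only
  · by_cases hm₂ : m₂ = 0
    · simp [hm₂, h₂]
    · simp [show ¬m₁ + m₂ ≤ m₁ by omega]
  · split_ifs with h
    · exact hmem₁ i h
    · exact hmem₂ _ (by omega)
  · by_cases h : i + 1 ≤ m₁
    · rw [if_pos (by omega), if_pos h]
      exact hstep₁ i h
    rw [if_neg h]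
    by_cases h' : i = m₁
    · subst h'
      rw [if_pos le_rfl, ← h₂, show i + 1 - i = 0 + 1 by omega]
      exact hstep₂ 0 (by omega)
    · rw [if_neg (by omega), show i + 1 - m₁ = i - m₁ + 1 by omega]
      exact hstep₂ _ (by omega)

lemma setOf_eq (hd : ∀ a b, d a b = d b a) (h : ScaleChain d s U x y) :
    {z | ScaleChain d s U x z} = {z | ScaleChain d s U y z} :=
  Set.ext fun _ => ⟨(h.symm hd).trans, h.trans⟩

end ScaleChain

theorem exists_scaleChain_le_dist {X : Type*} [PseudoMetricSpace X] {n m K : ℕ} (hmn : m < n)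
    (hK : 0 < K) {c s : ℝ} (hc : 0 ≤ c) (hs : n * c < s) (g : (Fin n → Fin (K + 1)) → X)
    (hg : ∀ a b, dist (g a) (g b) = c * ∑ i, |((a i : ℕ) : ℝ) - ((b i : ℕ) : ℝ)|)
    (U : Fin (m + 1) → Set X) (hU : ∀ x, ∃ i, x ∈ U i) :
    ∃ i x y, ScaleChain (fun a b => dist a b) s (U i) x y ∧ c * K ≤ dist x y := by
  choose χ hχ using fun a => hU (g a)
  let κ a := {y | ScaleChain (fun a b => dist a b) s (U (χ a)) (g a) y}
  have hκ (cell : Kuhn.Cell n K) : ∃ j₁ j₂ : Fin (n + 1), j₁ ≠ j₂ ∧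
      κ (Kuhn.vertex cell j₁) = κ (Kuhn.vertex cell j₂) := by
    obtain ⟨j₁, j₂, hne, hcol⟩ := Fintype.exists_ne_map_eq_of_card_lt
      (fun j : Fin (n + 1) => χ (Kuhn.vertex cell j)) (by simpa using hmn)
    refine ⟨j₁, j₂, hne, ?_⟩
    simp only [κ, ← hcol]
    refine ScaleChain.setOf_eq dist_comm (.of_lt (hχ _) (hcol ▸ hχ _) ?_)
    calc dist (g (Kuhn.vertex cell j₁)) (g (Kuhn.vertex cell j₂))
        ≤ c * ∑ _i : Fin n, (1 : ℝ) := by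
          rw [hg]
          gcongr with i
          exact Kuhn.abs_vertex_sub_vertex_le _ _ _ _
      _ < s := by simpa [mul_comm] using hs
  obtain ⟨v, w, t, hvw, hv, hw⟩ := exists_fiber_meets_opposite_faces hK κ hκ
  have hchain : g w ∈ κ v := hvw ▸ ScaleChain.refl (hχ w)
  refine ⟨χ v, g v, g w, hchain, ?_⟩
  calc c * K = c * |((v t : ℕ) : ℝ) - ((w t : ℕ) : ℝ)| := by simp [hv, hw]
    _ ≤ dist (g v) (g w) := by
      rw [hg]
      gcongr
      exact single_le_sum (f := fun i => |((v i : ℕ) : ℝ) - ((w i : ℕ) : ℝ)|)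
        (fun _ _ => abs_nonneg _) (mem_univ t)

/-- If a metric space contains a sequence of `n`-dimensional dilated cubes of sizes
`k m → ∞`, then its asymptotic Assouad-Nagata dimension is at least `n`, i.e. it is
not at most `m` for any `m < n`. -/
theorem asdimAN_ge_of_dilated_cubes {X : Type*} [PseudoMetricSpace X] (n : ℕ)
    (k : ℕ → ℕ) (C : ℕ → ℝ) (hC : ∀ m, 1 ≤ C m)
    (f : ∀ m, (Fin n → Fin (k m + 1)) → X)
    (hcube : ∀ m (a b : Fin n → Fin (k m + 1)),
      dist (f m a) (f m b) = C m * ∑ i, |((a i : ℕ) : ℝ) - ((b i : ℕ) : ℝ)|)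
    (hk : Tendsto (fun m => (k m : ℕ)) atTop atTop) :
    ∀ m : ℕ, m < n → ¬ ANdimLE (fun a b : X => dist a b) m := by
  rintro m hmn ⟨C', -, b, hcontrol⟩
  set L := C' * (n + 1) + max b 0
  obtain ⟨M, hM⟩ :=
    ((tendsto_natCast_atTop_atTop.comp hk).eventually_gt_atTop (max L 0)).exists
  simp only [Function.comp_apply, max_lt_iff] at hM
  obtain ⟨hLM, hkM⟩ := hM
  have hCM := hC M
  obtain ⟨U, hU, hbounded⟩ := hcontrol ((n + 1) * C M) (by positivity)
  obtain ⟨i, x, y, hxy, hdist⟩ := exists_scaleChain_le_dist hmn (by exact_mod_cast hkM)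
    (zero_le_one.trans hCM) (by linarith : n * C M < (n + 1) * C M) (f M) (hcube M) U hU
  have : C M * k M < C M * k M := calc
    C M * k M ≤ dist x y := hdist
    _ ≤ C' * ((n + 1) * C M) + b := hbounded i x y hxy
    _ ≤ C M * L := by nlinarith [le_max_left b 0, le_max_right b 0]
    _ < C M * k M := by gcongr
  exact lt_irrefl _ this
end

section
/- Let G be a countable group, G₁ a finite subgroup with proper left invariant metric d_{G₁}, and S ⊂ G a symmetric subset disjoint from G₁ such that G₁ ∪ S generates G. If w is a weight function on G₁ ∪ S ∪ S⁻¹ with w(g) = ‖g‖_{G₁} for g ∈ G₁ and w(g) ≥ diam(G₁) for g ∈ S ∪ S⁻¹, then the norm ‖g‖_w = min{Σᵢ w(sᵢ) : g = s₁⋯sₙ, sᵢ ∈ G₁ ∪ S ∪ S⁻¹} restricts on G₁ to ‖·‖_{G₁}. -/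
/-!
A word in the generators that uses a letter of `S` already weighs at least
`sup_H N₁ ≥ N₁ g`, as all weights are nonnegative; a word with all letters in `H` weighs at
least the norm of its product by the triangle inequality in `H`. The one-letter word `g`
attains `N₁ g`.
-/

theorem Subgroup.apply_list_prod_le_sum_map {G : Type*} [Group G] (H : Subgroup G)
    {N : G → ℝ} (hN1 : N 1 = 0) (hNtri : ∀ g ∈ H, ∀ h ∈ H, N (g * h) ≤ N g + N h) :
    ∀ l : List G, (∀ x ∈ l, x ∈ H) → N l.prod ≤ (l.map N).sum
  | [], _ => by simp [hN1]
  | a :: t, hl => by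
    have ha : a ∈ H := hl a List.mem_cons_self
    have htl : ∀ x ∈ t, x ∈ H := fun x hx => hl x (List.mem_cons_of_mem a hx)
    have ht := H.apply_list_prod_le_sum_map hN1 hNtri t htl
    calc N (a * t.prod) ≤ N a + N t.prod := hNtri a ha t.prod (H.list_prod_mem htl)
      _ ≤ N a + (t.map N).sum := by linarith
      _ = ((a :: t).map N).sum := by simp

theorem Subgroup.apply_le_sum_map_weight {G : Type*} [Group G] (H : Subgroup G)
    (hHfin : (H : Set G).Finite) {N w : G → ℝ} (hN1 : N 1 = 0)
    (hNtri : ∀ g ∈ H, ∀ h ∈ H, N (g * h) ≤ N g + N h) {S : Set G}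
    (hw_nonneg : ∀ g ∈ (H : Set G) ∪ S, 0 ≤ w g) (hwH : ∀ g ∈ H, w g = N g)
    (hwS : ∀ g ∈ S, sSup (N '' H) ≤ w g) {l : List G}
    (hl : ∀ x ∈ l, x ∈ (H : Set G) ∪ S) (hprod : l.prod ∈ H) :
    N l.prod ≤ (l.map w).sum := by
  by_cases hlH : ∀ x ∈ l, x ∈ H
  · rw [List.map_congr_left fun x hx => hwH x (hlH x hx)]
    exact H.apply_list_prod_le_sum_map hN1 hNtri l hlH
  · push Not at hlH
    obtain ⟨s, hsl, hsH⟩ := hlH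
    have hw_list_nonneg : ∀ r ∈ l.map w, 0 ≤ r := by
      simpa using fun x hx => hw_nonneg x (hl x hx)
    calc N l.prod ≤ sSup (N '' H) :=
          le_csSup (hHfin.image N).bddAbove (Set.mem_image_of_mem N hprod)
      _ ≤ w s := hwS s ((hl s hsl).resolve_left hsH)
      _ ≤ (l.map w).sum := List.single_le_sum hw_list_nonneg _ (List.mem_map_of_mem hsl)

theorem norm_extension_general {G : Type*} [Group G]
    (H : Subgroup G) (hHfin : (H : Set G).Finite)
    (N₁ : G → ℝ)
    (hN0 : ∀ g ∈ H, (N₁ g = 0 ↔ g = 1))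
    (hNtri : ∀ g ∈ H, ∀ h ∈ H, N₁ (g * h) ≤ N₁ g + N₁ h)
    (S : Set G)
    (w : G → ℝ)
    (hw0 : ∀ g ∈ (H : Set G) ∪ S, ((w g = 0 ↔ g = 1) ∧ w g⁻¹ = w g ∧ 0 ≤ w g))
    (hwH : ∀ g ∈ H, w g = N₁ g)
    (hwS : ∀ g ∈ S, sSup (N₁ '' (H : Set G)) ≤ w g) :
    ∀ g ∈ H,
      sInf {r : ℝ | ∃ l : List G, (∀ x ∈ l, x ∈ (H : Set G) ∪ S) ∧ l.prod = g ∧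
        (l.map w).sum = r} = N₁ g := by
  intro g hg
  refine IsLeast.csInf_eq ⟨⟨[g], by simp [hg], by simp, by simp [hwH g hg]⟩, ?_⟩
  rintro r ⟨l, hl, rfl, rfl⟩
  exact H.apply_le_sum_map_weight hHfin ((hN0 1 H.one_mem).2 rfl) hNtri
    (fun x hx => (hw0 x hx).2.2) hwH hwS hl hg

/-- Extension lemma for norms on countable groups: if the weight function `w` agrees with
the norm of the finite subgroup `H` on `H` and is at least `diam H` on the symmetric set
`S` disjoint from `H`, then the induced word-weight norm restricts on `H` to the norm of
`H`. -/
theorem norm_extension {G : Type*} [Group G] [Countable G]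
    (H : Subgroup G) (hHfin : (H : Set G).Finite)
    (N₁ : G → ℝ)
    (hN0 : ∀ g ∈ H, (N₁ g = 0 ↔ g = 1))
    (hNnn : ∀ g ∈ H, 0 ≤ N₁ g)
    (hNsymm : ∀ g ∈ H, N₁ g⁻¹ = N₁ g)
    (hNtri : ∀ g ∈ H, ∀ h ∈ H, N₁ (g * h) ≤ N₁ g + N₁ h)
    (S : Set G) (hSsymm : ∀ x ∈ S, x⁻¹ ∈ S) (hdisj : S ∩ (H : Set G) = ∅)
    (hgen : Subgroup.closure ((H : Set G) ∪ S) = ⊤)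
    (w : G → ℝ)
    (hw0 : ∀ g ∈ (H : Set G) ∪ S, ((w g = 0 ↔ g = 1) ∧ w g⁻¹ = w g ∧ 0 ≤ w g))
    (hwH : ∀ g ∈ H, w g = N₁ g)
    (hwS : ∀ g ∈ S, sSup (N₁ '' (H : Set G)) ≤ w g) :
    ∀ g ∈ H,
      sInf {r : ℝ | ∃ l : List G, (∀ x ∈ l, x ∈ (H : Set G) ∪ S) ∧ l.prod = g ∧
        (l.map w).sum = r} = N₁ g :=
  norm_extension_general H hHfin N₁ hN0 hNtri S w hw0 hwH hwS
end

section
/- Let G = ⊕_{i=1}^∞ Gᵢ be a direct sum of finite groups with proper left invariant metrics d_{Gᵢ} satisfying d_{Gᵢ}(x,y) ≥ 1 for distinct x, y. Let (sᵢ) be positive reals with s₁ ≥ 1 and sᵢ ≥ s_{i−1}·diam(G_{i−1}) + 1. Define k(g) = max{i : πᵢ(g) ≠ 1} (with k(1) = 0) and ‖g‖_G = s_{k(g)}·‖π_{k(g)}(g)‖_{G_{k(g)}}. Then ‖·‖_G is a proper norm on G, and for g ∈ Gᵢ the inclusion jᵢ: Gᵢ → G satisfies ‖jᵢ(g)‖_G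 = sᵢ·‖g‖_{Gᵢ}. -/
/-- The support of an element of a product of groups. -/
def gsupp {G : ℕ → Type*} [∀ i, Group (G i)] (g : ∀ i, G i) : Set ℕ :=
  {i | g i ≠ 1}

/-- The restricted direct product (direct sum) of a sequence of groups. -/
def RProd (G : ℕ → Type*) [∀ i, Group (G i)] : Subgroup (∀ i, G i) where
  carrier := {g | (gsupp g).Finite}
  one_mem' := by
    have : gsupp (1 : ∀ i, G i) = ∅ := by
      ext i; simp [gsupp]
    simp [this]
  mul_mem' := fun {a b} ha hb => by
    refine (ha.union hb).subset fun i hi => ?_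
    by_contra h
    simp only [gsupp, Set.mem_union, Set.mem_setOf_eq, not_or, not_not] at h hi
    exact hi (by simp [Pi.mul_apply, h.1, h.2])
  inv_mem' := fun {a} ha => by
    refine ha.subset fun i hi => ?_
    simp only [gsupp, Set.mem_setOf_eq, Pi.inv_apply, ne_eq, inv_eq_one] at hi ⊢
    exact hi

/-- `k(g) = max { i | πᵢ(g) ≠ 1 }` (equal to `0` for `g = 1`). -/
noncomputable def kval {G : ℕ → Type*} [∀ i, Group (G i)] (g : ∀ i, G i) : ℕ :=
  sSup (gsupp g)

/-- The norm `‖g‖_G = s_{k(g)} · ‖π_{k(g)}(g)‖_{G_{k(g)}}`. -/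
noncomputable def normG {G : ℕ → Type*} [∀ i, Group (G i)]
    (s : ℕ → ℝ) (N : ∀ i, G i → ℝ) (g : ∀ i, G i) : ℝ :=
  s (kval g) * N (kval g) (g (kval g))

/-- A norm coming from a left invariant metric with `d(x,y) ≥ 1` for distinct `x,y`. -/
def GroupNormOne {H : Type*} [Group H] (N : H → ℝ) : Prop :=
  (∀ g, N g = 0 ↔ g = 1) ∧ (∀ g, N g⁻¹ = N g) ∧ (∀ g h, N (g * h) ≤ N g + N h) ∧
    ∀ g, g ≠ 1 → 1 ≤ N g

/-- Diameter of a finite group with norm `N`. -/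
noncomputable def gdiam {H : Type*} (N : H → ℝ) : ℝ := sSup (Set.range N)

section helpers
variable {G : ℕ → Type*} [∀ i, Group (G i)]

lemma gsupp_eq_empty {g : ∀ i, G i} : gsupp g = ∅ ↔ g = 1 := by
  constructor
  · intro h
    funext i
    by_contra hi
    exact absurd (h ▸ (hi : i ∈ gsupp g)) (Set.notMem_empty i)
  · rintro rfl; ext i; simp [gsupp]

lemma kval_one' : kval (1 : ∀ i, G i) = 0 := by
  rw [kval, gsupp_eq_empty.mpr rfl, csSup_empty]; rfl

lemma le_kval {g : ∀ i, G i} (hf : (gsupp g).Finite) {i : ℕ} (hi : i ∈ gsupp g) :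
    i ≤ kval g := le_csSup hf.bddAbove hi

lemma kval_mem {g : ∀ i, G i} (hf : (gsupp g).Finite) (hg : g ≠ 1) :
    kval g ∈ gsupp g :=
  Nat.sSup_mem (Set.nonempty_iff_ne_empty.mpr fun h => hg (gsupp_eq_empty.mp h)) hf.bddAbove

end helpers

/-- `‖·‖_G` is a proper norm on `G = ⊕ᵢ Gᵢ` and on each `Gᵢ` (embedded canonically) it
equals `sᵢ · ‖·‖_{Gᵢ}`. -/
theorem normG_proper_norm (G : ℕ → Type*) [∀ i, Group (G i)] [∀ i, Fintype (G i)]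
    [Subsingleton (G 0)] [∀ i, Nontrivial (G (i + 1))]
    (N : ∀ i, G i → ℝ) (hN : ∀ i, GroupNormOne (N i))
    (s : ℕ → ℝ) (hs1 : 1 ≤ s 1)
    (hs : ∀ i, s i * gdiam (N i) + 1 ≤ s (i + 1)) :
    ((∀ g : RProd G, normG s N (g : ∀ i, G i) = 0 ↔ g = 1) ∧
      (∀ g : RProd G, normG s N ((g⁻¹ : RProd G) : ∀ i, G i) = normG s N (g : ∀ i, G i)) ∧
      (∀ g h : RProd G,
        normG s N ((g * h : RProd G) : ∀ i, G i) ≤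
          normG s N (g : ∀ i, G i) + normG s N (h : ∀ i, G i)) ∧
      (∀ K : ℝ, {g : RProd G | normG s N (g : ∀ i, G i) ≤ K}.Finite)) ∧
    ∀ (i : ℕ) (g : G i), normG s N (Pi.mulSingle i g) = s i * N i g := by
  -- basic facts about the norms N i
  have hN0 : ∀ i, N i 1 = 0 := fun i => ((hN i).1 1).mpr rfl
  have hNnn : ∀ i (x : G i), 0 ≤ N i x := by
    intro i x
    by_cases hx : x = 1
    · rw [hx, hN0]
    · linarith [(hN i).2.2.2 x hx]
  have hdle : ∀ i (x : G i), N i x ≤ gdiam (N i) :=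
    fun i x => le_csSup (Set.finite_range (N i)).bddAbove ⟨x, rfl⟩
  have hd0 : ∀ i, 0 ≤ gdiam (N i) := fun i => (hN0 i) ▸ hdle i 1
  have hd1 : ∀ i, 1 ≤ gdiam (N (i + 1)) := by
    intro i
    obtain ⟨x, hx⟩ := exists_ne (1 : G (i + 1))
    exact le_trans ((hN _).2.2.2 x hx) (hdle _ x)
  -- basic facts about s
  have hspos : ∀ j, 1 ≤ j → 1 ≤ s j := by
    intro j hj
    induction j with
    | zero => omega
    | succ n ih =>
      rcases Nat.eq_zero_or_pos n with h0 | h0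
      · subst h0; exact hs1
      · have h1 := ih h0
        have h2 := hs n
        nlinarith [hd0 n]
  have hsm : ∀ j m, 1 ≤ j → j ≤ m → s j ≤ s m := by
    intro j m hj hjm
    induction m with
    | zero => omega
    | succ n ih =>
      rcases Nat.lt_or_ge j (n + 1) with hlt | hge
      · have hjn : j ≤ n := by omega
        have h1 : 1 ≤ n := le_trans hj hjn
        obtain ⟨n', rfl⟩ : ∃ n', n = n' + 1 := ⟨n - 1, by omega⟩
        have h2 := hs (n' + 1)
        nlinarith [hd1 n', hspos (n' + 1) (by omega), ih hjn]
      · have : j = n + 1 := by omega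
        subst this; exact le_refl _
  have hsnat : ∀ n : ℕ, 1 ≤ n → (n : ℝ) ≤ s n := by
    intro n hn
    induction n with
    | zero => omega
    | succ m ih =>
      rcases Nat.eq_zero_or_pos m with h0 | h0
      · subst h0; simpa using hs1
      · have h1 := ih h0
        obtain ⟨m', rfl⟩ : ∃ m', m = m' + 1 := ⟨m - 1, by omega⟩
        have h2 := hs (m' + 1)
        push_cast
        push_cast at h1
        nlinarith [hd1 m', hspos (m' + 1) (by omega)]
  -- finiteness of supports
  have hfin : ∀ g : RProd G, (gsupp (g : ∀ i, G i)).Finite := fun g => g.2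
  have hnormG_one : normG s N (1 : ∀ i, G i) = 0 := by
    rw [normG, kval_one', Pi.one_apply, hN0, mul_zero]
  -- key estimate for nontrivial elements
  have hkey : ∀ g : RProd G, (g : ∀ i, G i) ≠ 1 →
      1 ≤ kval (g : ∀ i, G i) ∧ s (kval (g : ∀ i, G i)) ≤ normG s N (g : ∀ i, G i) := by
    intro g hg
    have hmem := kval_mem (hfin g) hg
    have hk1 : 1 ≤ kval (g : ∀ i, G i) := by
      rcases Nat.eq_zero_or_pos (kval (g : ∀ i, G i)) with h0 | h0
      · exfalso
        have hne : (g : ∀ i, G i) (kval (g : ∀ i, G i)) ≠ 1 := hmem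
        rw [h0] at hne
        exact hne (Subsingleton.elim _ _)
      · exact h0
    have hNk : 1 ≤ N _ ((g : ∀ i, G i) (kval (g : ∀ i, G i))) := (hN _).2.2.2 _ hmem
    have hsk := hspos _ hk1
    refine ⟨hk1, ?_⟩
    rw [normG]
    nlinarith
  have hnn : ∀ g : RProd G, 0 ≤ normG s N (g : ∀ i, G i) := by
    intro g
    by_cases hg : (g : ∀ i, G i) = 1
    · rw [hg, hnormG_one]
    · linarith [(hkey g hg).2, hspos _ (hkey g hg).1]
  refine ⟨⟨?_, ?_, ?_, ?_⟩, ?_⟩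
  -- (1) norm zero iff identity
  · intro g
    constructor
    · intro h
      by_contra hg
      have hg' : (g : ∀ i, G i) ≠ 1 := fun h' => hg (Subtype.ext h')
      linarith [(hkey g hg').2, hspos _ (hkey g hg').1]
    · rintro rfl
      rw [OneMemClass.coe_one]
      exact hnormG_one
  -- (2) symmetry
  · intro g
    have hcoe : ((g⁻¹ : RProd G) : ∀ i, G i) = (g : ∀ i, G i)⁻¹ := rfl
    have hsupp : gsupp ((g : ∀ i, G i)⁻¹) = gsupp (g : ∀ i, G i) := by
      ext i; simp [gsupp]
    have hkk : kval ((g : ∀ i, G i)⁻¹) = kval (g : ∀ i, G i) := by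
      rw [kval, kval, hsupp]
    rw [hcoe, normG, normG, hkk, Pi.inv_apply, (hN _).2.1]
  -- (3) triangle inequality
  · intro g h
    have hcoe : ((g * h : RProd G) : ∀ i, G i) = (g : ∀ i, G i) * (h : ∀ i, G i) := rfl
    rw [hcoe]
    set a := (g : ∀ i, G i) with ha
    set b := (h : ∀ i, G i) with hb
    have hfa : (gsupp a).Finite := hfin g
    have hfb : (gsupp b).Finite := hfin h
    by_cases hck : (a * b) (kval (a * b)) = 1
    · rw [normG, hck, hN0, mul_zero]
      exact add_nonneg (hnn g) (hnn h)
    have hfab : (gsupp (a * b)).Finite := hfin (g * h)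
    have hab1 : a * b ≠ 1 := fun hc => hck (by rw [hc, Pi.one_apply])
    have hkmem : kval (a * b) ∈ gsupp (a * b) := kval_mem hfab hab1
    have hk1 : 1 ≤ kval (a * b) := (hkey (g * h) hab1).1
    have hksub : kval (a * b) ∈ gsupp a ∪ gsupp b := by
      by_contra hcon
      simp only [Set.mem_union, gsupp, Set.mem_setOf_eq, not_or, not_not] at hcon
      exact hkmem (by simp [Pi.mul_apply, hcon.1, hcon.2])
    rcases Nat.lt_or_ge (kval a) (kval (a * b)) with hka | hka
    · -- kval a < kval (a*b); then kval (a*b) = kval b and norm (a*b) = norm b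
      have hak : a (kval (a * b)) = 1 := by
        by_contra hne
        exact absurd (le_kval (hfa) hne) (by omega)
      have hbk : b (kval (a * b)) ≠ 1 := by
        intro hbe
        exact hck (by simp [Pi.mul_apply, hak, hbe])
      have hkkb : kval (a * b) ≤ kval b := le_kval (hfb) hbk
      have hkb : kval (a * b) = kval b := by
        by_contra hne
        have hlt : kval (a * b) < kval b := by omega
        have hb1 : b ≠ 1 := fun hbe => hbk (by rw [hbe, Pi.one_apply])
        have hkbmem : kval b ∈ gsupp b := kval_mem (hfb) hb1
        have habkb : (a * b) (kval b) = 1 := by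
          by_contra hne2
          exact absurd (le_kval hfab hne2) (by omega)
        have hakb : a (kval b) ≠ 1 := by
          intro hae
          rw [Pi.mul_apply, hae, one_mul] at habkb
          exact hkbmem habkb
        have := le_kval (hfa) hakb
        omega
      have heq : normG s N (a * b) = normG s N b := by
        rw [normG, normG, hkb, Pi.mul_apply]
        rw [show a (kval b) = 1 from hkb ▸ hak, one_mul]
      rw [heq]
      linarith [hnn g]
    rcases Nat.lt_or_ge (kval b) (kval (a * b)) with hkb | hkb
    · -- symmetric case
      have hbk : b (kval (a * b)) = 1 := by
        by_contra hne
        exact absurd (le_kval (hfb) hne) (by omega)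
      have hak : a (kval (a * b)) ≠ 1 := by
        intro hae
        exact hck (by simp [Pi.mul_apply, hae, hbk])
      have hkka : kval (a * b) ≤ kval a := le_kval (hfa) hak
      have hkaeq : kval (a * b) = kval a := by
        by_contra hne
        have hlt : kval (a * b) < kval a := by omega
        have ha1 : a ≠ 1 := fun hae => hak (by rw [hae, Pi.one_apply])
        have hkamem : kval a ∈ gsupp a := kval_mem (hfa) ha1
        have habka : (a * b) (kval a) = 1 := by
          by_contra hne2
          exact absurd (le_kval hfab hne2) (by omega)
        have hbka : b (kval a) ≠ 1 := by
          intro hbe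
          rw [Pi.mul_apply, hbe, mul_one] at habka
          exact hkamem habka
        have := le_kval (hfb) hbka
        omega
      have heq : normG s N (a * b) = normG s N a := by
        rw [normG, normG, hkaeq, Pi.mul_apply]
        rw [show b (kval a) = 1 from hkaeq ▸ hbk, mul_one]
      rw [heq]
      linarith [hnn h]
    -- now kval (a*b) ≤ kval a and kval (a*b) ≤ kval b
    rcases Nat.lt_or_ge (kval (a * b)) (max (kval a) (kval b)) with hlt | hge
    · -- strict case: both kval a and kval b equal the max m > kval (a*b)
      have hm1 : (a * b) (max (kval a) (kval b)) = 1 := by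
        by_contra hne
        exact absurd (le_kval hfab hne) (by omega)
      have hmboth : a (max (kval a) (kval b)) ≠ 1 ∧ b (max (kval a) (kval b)) ≠ 1 := by
        rw [Pi.mul_apply] at hm1
        rcases max_cases (kval a) (kval b) with ⟨hmax, hle⟩ | ⟨hmax, hle⟩
        · -- max = kval a
          have ha1 : a ≠ 1 := by
            intro hae
            have : kval a = 0 := by rw [hae]; exact kval_one'
            omega
          have hamem : a (kval a) ≠ 1 := kval_mem (hfa) ha1
          rw [hmax] at hm1 ⊢
          refine ⟨hamem, fun hbe => hamem ?_⟩
          rw [hbe, mul_one] at hm1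
          exact hm1
        · have hb1 : b ≠ 1 := by
            intro hbe
            have : kval b = 0 := by rw [hbe]; exact kval_one'
            omega
          have hbmem : b (kval b) ≠ 1 := kval_mem (hfb) hb1
          rw [hmax] at hm1 ⊢
          refine ⟨fun hae => hbmem ?_, hbmem⟩
          rw [hae, one_mul] at hm1
          exact hm1
      have hkaeq : kval a = max (kval a) (kval b) :=
        le_antisymm (le_max_left _ _) (le_kval (hfa) hmboth.1)
      have hkbeq : kval b = max (kval a) (kval b) :=
        le_antisymm (le_max_right _ _) (le_kval (hfb) hmboth.2)
      -- estimates
      set m := max (kval a) (kval b) with hmdef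
      have hNa : 1 ≤ N m (a m) := (hN m).2.2.2 _ hmboth.1
      have hNb : 1 ≤ N m (b m) := (hN m).2.2.2 _ hmboth.2
      have hsmpos : 1 ≤ s m := hspos m (by omega)
      have hskd : s (kval (a * b)) * gdiam (N (kval (a * b))) + 1 ≤ s (kval (a * b) + 1) :=
        hs _
      have hmono : s (kval (a * b) + 1) ≤ s m := hsm _ _ (by omega) (by omega)
      have hNle : N _ ((a * b) (kval (a * b))) ≤ gdiam (N (kval (a * b))) := hdle _ _
      have hsknn : 0 ≤ s (kval (a * b)) := le_trans zero_le_one (hspos _ hk1)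
      have hL : normG s N (a * b) ≤ s m := by
        rw [normG]
        nlinarith
      have hR : 2 * s m ≤ normG s N a + normG s N b := by
        rw [normG, normG, ← hkaeq, ← hkbeq] at *
        nlinarith [hspos (kval a) (by omega)]
      linarith
    · -- kval (a*b) = kval a = kval b : plain triangle inequality
      have hkaeq : kval (a * b) = kval a := by omega
      have hkbeq : kval (a * b) = kval b := by omega
      rw [normG, normG, normG, ← hkaeq, ← hkbeq, Pi.mul_apply]
      have htri := (hN (kval (a * b))).2.2.1 (a (kval (a * b))) (b (kval (a * b)))
      nlinarith [hspos _ hk1]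
  -- (4) properness
  · intro K
    obtain ⟨n, hn⟩ := exists_nat_ge K
    have hsub : {g : RProd G | normG s N (g : ∀ i, G i) ≤ K} ⊆
        {g : RProd G | ∀ j, n < j → (g : ∀ i, G i) j = 1} := by
      intro g hg j hj
      by_contra hne
      have hg1 : (g : ∀ i, G i) ≠ 1 := by
        intro hge
        exact hne (by rw [hge, Pi.one_apply])
      have hjk : j ≤ kval (g : ∀ i, G i) := le_kval (hfin g) hne
      have h1 := (hkey g hg1).1
      have h2 := (hkey g hg1).2
      have h3 := hsnat (kval (g : ∀ i, G i)) h1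
      have h4 : (j : ℝ) ≤ (kval (g : ∀ i, G i) : ℝ) := by exact_mod_cast hjk
      have h5 : (n : ℝ) < (j : ℝ) := by exact_mod_cast hj
      have h6 : normG s N (g : ∀ i, G i) ≤ K := hg
      linarith
    apply Set.Finite.subset _ hsub
    have hinj : Set.InjOn (fun (g : RProd G) => fun i : Fin (n + 1) => (g : ∀ j, G j) i)
        {g : RProd G | ∀ j, n < j → (g : ∀ i, G i) j = 1} := by
      intro x hx y hy hxy
      apply Subtype.ext
      funext j
      rcases Nat.lt_or_ge n j with hlt | hge
      · rw [hx j hlt, hy j hlt]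
      · exact congrFun hxy ⟨j, by omega⟩
    exact Set.Finite.of_finite_image (Set.toFinite _) hinj
  -- (5) value on canonically embedded elements
  · intro i g
    by_cases hg : g = 1
    · subst hg
      rw [Pi.mulSingle_one, hnormG_one, hN0, mul_zero]
    · have hsupp : gsupp (Pi.mulSingle i g) = {i} := by
        ext j
        simp only [gsupp, Set.mem_setOf_eq, Set.mem_singleton_iff]
        constructor
        · intro hj
          by_contra hji
          exact hj (Pi.mulSingle_eq_of_ne hji g)
        · rintro rfl
          rw [Pi.mulSingle_eq_same]
          exact hg
      have hk : kval (Pi.mulSingle i g) = i := by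
        rw [kval, hsupp, csSup_singleton]
      rw [normG, hk, Pi.mulSingle_eq_same]
end

section
/- With G = ⊕_{i=1}^∞ Gᵢ and the quasi-ultrametric d_G generated by {d_{Gᵢ}} as above, for any g₁, g₂, g₃ ∈ G with pairwise distinct values k(g₁), k(g₂), k(g₃) one has d_G(g₁,g₂) ≤ max{d_G(g₂,g₃), d_G(g₁,g₃)}. -/
section Aux

variable {G : ℕ → Type*} [∀ i, Group (G i)]

lemma apply_eq_one_of_kval_lt {g : ∀ i, G i} (hf : (gsupp g).Finite)
    {i : ℕ} (hi : kval g < i) : g i = 1 := by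
  by_contra h
  exact absurd (le_csSup hf.bddAbove (h : i ∈ gsupp g)) (not_le.mpr hi)

lemma kval_ne_one {g : ∀ i, G i} (hf : (gsupp g).Finite) (h0 : 0 < kval g) :
    g (kval g) ≠ 1 := by
  have hne : (gsupp g).Nonempty := by
    rcases Set.eq_empty_or_nonempty (gsupp g) with he | hne
    · exfalso
      have : kval g = 0 := by simp [kval, he]
      omega
    · exact hne
  exact hne.csSup_mem hf

lemma gsupp_inv_mul_finite {g h : ∀ i, G i} (hg : (gsupp g).Finite)
    (hh : (gsupp h).Finite) : (gsupp (g⁻¹ * h)).Finite := by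
  refine (hg.union hh).subset fun i hi => ?_
  by_contra hc
  simp only [gsupp, Set.mem_union, Set.mem_setOf_eq, not_or, not_not] at hc hi
  exact hi (by simp [Pi.mul_apply, Pi.inv_apply, hc.1, hc.2])

lemma kval_inv_mul_lt {g h : ∀ i, G i} (hg : (gsupp g).Finite) (hh : (gsupp h).Finite)
    (hlt : kval g < kval h) :
    kval (g⁻¹ * h) = kval h ∧ (g⁻¹ * h) (kval h) = h (kval h) := by
  have h0 : 0 < kval h := Nat.lt_of_le_of_lt (Nat.zero_le _) hlt
  have hhm : h (kval h) ≠ 1 := kval_ne_one hh h0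
  have hgm : g (kval h) = 1 := apply_eq_one_of_kval_lt hg hlt
  have happ : (g⁻¹ * h) (kval h) = h (kval h) := by
    simp [Pi.mul_apply, Pi.inv_apply, hgm]
  have hmem : kval h ∈ gsupp (g⁻¹ * h) := by
    show (g⁻¹ * h) (kval h) ≠ 1
    rw [happ]; exact hhm
  refine ⟨le_antisymm ?_ (le_csSup (gsupp_inv_mul_finite hg hh).bddAbove hmem), happ⟩
  refine csSup_le ⟨kval h, hmem⟩ fun i hi => ?_
  by_contra hi'
  push_neg at hi'
  have hg' : g i = 1 := apply_eq_one_of_kval_lt hg (hlt.trans hi')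
  have hh' : h i = 1 := apply_eq_one_of_kval_lt hh hi'
  exact hi (by simp [Pi.mul_apply, Pi.inv_apply, hg', hh'])

lemma normG_inv_mul_lt (s : ℕ → ℝ) (N : ∀ i, G i → ℝ)
    {g h : ∀ i, G i} (hg : (gsupp g).Finite) (hh : (gsupp h).Finite)
    (hlt : kval g < kval h) :
    normG s N (g⁻¹ * h) = s (kval h) * N (kval h) (h (kval h)) := by
  obtain ⟨hk, hv⟩ := kval_inv_mul_lt hg hh hlt
  rw [normG, hk, hv]

lemma gsupp_inv (g : ∀ i, G i) : gsupp g⁻¹ = gsupp g := by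
  ext i; simp [gsupp]

lemma kval_inv (g : ∀ i, G i) : kval g⁻¹ = kval g := by
  unfold kval; rw [gsupp_inv]

lemma normG_inv (s : ℕ → ℝ) (N : ∀ i, G i → ℝ) (hN : ∀ i, GroupNormOne (N i))
    (g : ∀ i, G i) : normG s N g⁻¹ = normG s N g := by
  unfold normG
  rw [kval_inv, Pi.inv_apply, (hN _).2.1]

lemma normG_inv_mul_comm (s : ℕ → ℝ) (N : ∀ i, G i → ℝ) (hN : ∀ i, GroupNormOne (N i))
    (g h : ∀ i, G i) : normG s N (g⁻¹ * h) = normG s N (h⁻¹ * g) := by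
  rw [← normG_inv s N hN (g⁻¹ * h), mul_inv_rev, inv_inv]

end Aux

/-- The quasi-ultrametric `d_G(g,h) = ‖g⁻¹h‖_G` on `G = ⊕ᵢ Gᵢ` satisfies the ultrametric
inequality on triples with pairwise distinct values of `k`. -/
theorem quasi_ultrametric_on_distinct_levels (G : ℕ → Type*) [∀ i, Group (G i)]
    [∀ i, Fintype (G i)] [Subsingleton (G 0)] [∀ i, Nontrivial (G (i + 1))]
    (N : ∀ i, G i → ℝ) (hN : ∀ i, GroupNormOne (N i))
    (s : ℕ → ℝ) (hs1 : 1 ≤ s 1)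
    (hs : ∀ i, s i * gdiam (N i) + 1 ≤ s (i + 1))
    (g₁ g₂ g₃ : ∀ i, G i)
    (h₁ : (gsupp g₁).Finite) (h₂ : (gsupp g₂).Finite) (h₃ : (gsupp g₃).Finite)
    (h12 : kval g₁ ≠ kval g₂) (h13 : kval g₁ ≠ kval g₃) (h23 : kval g₂ ≠ kval g₃) :
    normG s N (g₁⁻¹ * g₂) ≤ max (normG s N (g₂⁻¹ * g₃)) (normG s N (g₁⁻¹ * g₃)) := by
  -- basic numeric facts
  have hdiam : ∀ i (x : G i), N i x ≤ gdiam (N i) := fun i x =>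
    le_csSup (Set.finite_range _).bddAbove ⟨x, rfl⟩
  have hN1 : ∀ i (x : G i), x ≠ 1 → 1 ≤ N i x := fun i => (hN i).2.2.2
  have hdiam1 : ∀ i, 1 ≤ i → 1 ≤ gdiam (N i) := by
    intro i hi
    obtain ⟨j, rfl⟩ : ∃ j, i = j + 1 := ⟨i - 1, by omega⟩
    obtain ⟨x, hx⟩ := exists_ne (1 : G (j + 1))
    exact le_trans (hN1 _ x hx) (hdiam _ x)
  have hs_ge1 : ∀ i, 1 ≤ i → 1 ≤ s i := by
    intro i hi
    induction i with
    | zero => omega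
    | succ n ih =>
      rcases Nat.eq_zero_or_pos n with h0 | h0
      · subst h0; exact hs1
      · have h1 := hs n
        have h2 := ih h0
        have h3 := hdiam1 n h0
        nlinarith
  have hs_step : ∀ n, 1 ≤ n → s n + 1 ≤ s (n + 1) := by
    intro n hn
    have h1 := hs n
    have h2 := hs_ge1 n hn
    have h3 := hdiam1 n hn
    nlinarith
  have hs_mono : ∀ i, 1 ≤ i → ∀ j, i ≤ j → s i ≤ s j := by
    intro i hi j hj
    induction j with
    | zero => omega
    | succ n ih =>
      rcases Nat.lt_or_ge i (n + 1) with h | h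
      · have hn : i ≤ n := by omega
        have := hs_step n (by omega)
        have := ih hn
        linarith
      · have : i = n + 1 := by omega
        subst this
        exact le_rfl
  have key : ∀ m c', 1 ≤ m → m < c' → s m * gdiam (N m) + 1 ≤ s c' := by
    intro m c' hm hmc
    exact le_trans (hs m) (hs_mono (m + 1) (by omega) c' (by omega))
  -- the three levels
  by_cases hab : kval g₁ < kval g₂
  · by_cases hbc : kval g₂ < kval g₃
    · -- kval g₃ is the largest; m = kval g₂
      have hLHS := normG_inv_mul_lt s N h₁ h₂ hab
      have hRHS := normG_inv_mul_lt s N h₁ h₃ (hab.trans hbc)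
      have hc0 : 0 < kval g₃ := by omega
      have hg3 : g₃ (kval g₃) ≠ 1 := kval_ne_one h₃ hc0
      have hm1 : (1 : ℕ) ≤ kval g₂ := by omega
      have hsb := hs_ge1 _ hm1
      have hsc := hs_ge1 (kval g₃) (by omega)
      have hNge := hN1 _ _ hg3
      have hkey := key (kval g₂) (kval g₃) hm1 hbc
      have hb1 : s (kval g₂) * N (kval g₂) (g₂ (kval g₂)) ≤
          s (kval g₂) * gdiam (N (kval g₂)) :=
        mul_le_mul_of_nonneg_left (hdiam _ _) (by linarith)
      refine le_max_of_le_right ?_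
      rw [hLHS, hRHS]
      nlinarith
    · -- kval g₂ is the largest (a < b, c < b)
      have hcb : kval g₃ < kval g₂ := by omega
      have hLHS := normG_inv_mul_lt s N h₁ h₂ hab
      have hRHS : normG s N (g₂⁻¹ * g₃) = s (kval g₂) * N (kval g₂) (g₂ (kval g₂)) := by
        rw [normG_inv_mul_comm s N hN]
        exact normG_inv_mul_lt s N h₃ h₂ hcb
      rw [hLHS, ← hRHS]
      exact le_max_left _ _
  · have hba : kval g₂ < kval g₁ := by omega
    by_cases hac : kval g₁ < kval g₃
    · -- kval g₃ largest; m = kval g₁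
      have hLHS : normG s N (g₁⁻¹ * g₂) = s (kval g₁) * N (kval g₁) (g₁ (kval g₁)) := by
        rw [normG_inv_mul_comm s N hN]
        exact normG_inv_mul_lt s N h₂ h₁ hba
      have hRHS := normG_inv_mul_lt s N h₁ h₃ hac
      have hc0 : 0 < kval g₃ := by omega
      have hg3 : g₃ (kval g₃) ≠ 1 := kval_ne_one h₃ hc0
      have hm1 : (1 : ℕ) ≤ kval g₁ := by omega
      have hsa := hs_ge1 _ hm1
      have hsc := hs_ge1 (kval g₃) (by omega)
      have hNge := hN1 _ _ hg3
      have hkey := key (kval g₁) (kval g₃) hm1 hac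
      have hb1 : s (kval g₁) * N (kval g₁) (g₁ (kval g₁)) ≤
          s (kval g₁) * gdiam (N (kval g₁)) :=
        mul_le_mul_of_nonneg_left (hdiam _ _) (by linarith)
      refine le_max_of_le_right ?_
      rw [hLHS, hRHS]
      nlinarith
    · -- kval g₁ largest (b < a, c < a)
      have hca : kval g₃ < kval g₁ := by omega
      have hLHS : normG s N (g₁⁻¹ * g₂) = s (kval g₁) * N (kval g₁) (g₁ (kval g₁)) := by
        rw [normG_inv_mul_comm s N hN]
        exact normG_inv_mul_lt s N h₂ h₁ hba
      have hRHS : normG s N (g₁⁻¹ * g₃) = s (kval g₁) * N (kval g₁) (g₁ (kval g₁)) := by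
        rw [normG_inv_mul_comm s N hN]
        exact normG_inv_mul_lt s N h₃ h₁ hca
      rw [hLHS, ← hRHS]
      exact le_max_right _ _
end

section
/- Let G = ⊕_{i=1}^∞ Gᵢ with quasi-ultrametric d_G generated by metrics d_{Gᵢ} (with scaling sequence sᵢ as above). Suppose there is a constant C ≥ 1 such that for every i and every s ∈ (1, diam(Gᵢ)] there is a cover {U₀,...,Uₙ} of (Gᵢ, d_{Gᵢ}) whose s-scale connected components are C·s-bounded. Then asdim_AN(G, d_G) ≤ n. -/
/-! The constraint `sᵢ·diam(Gᵢ) < s_{i+1}` makes `d_G` behave like an ultrametric across levels: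
an `r`-chain with `s_ℓ < r ≤ s_{ℓ+1}` cannot change any coordinate above `ℓ`, so two points it
joins differ only in the coordinates `≤ ℓ`. Pulling back a cover of `G_ℓ` at scale `r / s_ℓ` along
the projection to `G_ℓ` then controls the `ℓ`-th coordinate of the difference, and all lower
coordinates together weigh less than `s_ℓ < r`. When `r / s_ℓ` exceeds `diam G_ℓ` the given covers
are not needed: a single set already works. Scales `r ≤ s₁` are trivial, since there every
`r`-chain is constant. -/

namespace ScaleChain

variable {X Y : Type*}

theorem map {d : X → X → ℝ} {d' : Y → Y → ℝ} {r r' : ℝ} {f : X → Y} {V : Set Y} {x y : X}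
    (hf : ∀ a b, d a b < r → d' (f a) (f b) < r') (h : ScaleChain d r (f ⁻¹' V) x y) :
    ScaleChain d' r' V (f x) (f y) := by
  obtain ⟨m, c, rfl, rfl, hmem, hstep⟩ := h
  exact ⟨m, f ∘ c, rfl, rfl, hmem, fun i hi => hf _ _ (hstep i hi)⟩

theorem inv_mul_mem [Group X] {ν : X → ℝ} {r : ℝ} {U : Set X} {x y : X} (K : Subgroup X)
    (hK : ∀ u, ν u < r → u ∈ K) (h : ScaleChain (fun a b => ν (a⁻¹ * b)) r U x y) :
    x⁻¹ * y ∈ K := by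
  obtain ⟨m, c, rfl, rfl, -, hstep⟩ := h
  suffices ∀ l ≤ m, (c 0)⁻¹ * c l ∈ K from this m le_rfl
  intro l
  induction l with
  | zero => simp
  | succ l ih =>
    intro hl
    have hmul := K.mul_mem (ih (by omega)) (hK _ (hstep l (by omega)))
    rwa [mul_assoc, mul_inv_cancel_left] at hmul

end ScaleChain

theorem exists_cover_of_one_lt {X : Type*} {d : X → X → ℝ} {D : ℝ} (hd : ∀ x y, d x y ≤ D)
    {n : ℕ} {C : ℝ} (hC : 1 ≤ C)
    (hcov : ∀ t : ℝ, 1 < t → t ≤ D → ∃ U : Fin (n + 1) → Set X, (∀ x, ∃ j, x ∈ U j) ∧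
      ∀ j x y, ScaleChain d t (U j) x y → d x y ≤ C * t)
    {t : ℝ} (ht : 1 < t) : ∃ U : Fin (n + 1) → Set X, (∀ x, ∃ j, x ∈ U j) ∧
      ∀ j x y, ScaleChain d t (U j) x y → d x y ≤ C * t := by
  by_cases htD : t ≤ D
  · exact hcov t ht htD
  · refine ⟨fun _ => Set.univ, fun _ => ⟨0, trivial⟩, fun _ x y _ => ?_⟩
    nlinarith [hd x y]

theorem exists_le_zero_or_lt_le_succ {a : ℕ → ℝ} (ha : ∀ r, ∃ m, r ≤ a m) (r : ℝ) :
    r ≤ a 0 ∨ ∃ i, a i < r ∧ r ≤ a (i + 1) := by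
  classical
  have hfind := Nat.find_spec (ha r)
  rcases hm : Nat.find (ha r) with _ | i
  · exact Or.inl (hm ▸ hfind)
  · exact Or.inr ⟨i, not_le.mp (Nat.find_min (ha r) (by omega)), hm ▸ hfind⟩

theorem le_gdiam {H : Type*} [Finite H] (N : H → ℝ) (g : H) : N g ≤ gdiam N :=
  le_csSup (Set.finite_range N).bddAbove ⟨g, rfl⟩

section GroupNormOne

variable {H : Type*} [Group H] {N : H → ℝ}

theorem GroupNormOne.map_one (hN : GroupNormOne N) : N 1 = 0 :=
  (hN.1 1).mpr rfl

theorem GroupNormOne.one_le (hN : GroupNormOne N) {g : H} (hg : g ≠ 1) : 1 ≤ N g :=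
  hN.2.2.2 g hg

theorem GroupNormOne.nonneg (hN : GroupNormOne N) (g : H) : 0 ≤ N g := by
  rcases eq_or_ne g 1 with rfl | hg
  · exact hN.map_one.ge
  · linarith [hN.one_le hg]

theorem GroupNormOne.one_le_gdiam [Finite H] [Nontrivial H] (hN : GroupNormOne N) :
    1 ≤ gdiam N := by
  obtain ⟨g, hg⟩ := exists_ne (1 : H)
  exact (hN.one_le hg).trans (le_gdiam N g)

end GroupNormOne

section ScalingSequence

variable {s D : ℕ → ℝ}

theorem one_le_scale (hs1 : 1 ≤ s 1) (hs : ∀ i, s i * D i + 1 ≤ s (i + 1))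
    (hD : ∀ i, 1 ≤ D (i + 1)) (i : ℕ) : 1 ≤ s (i + 1) := by
  induction i with
  | zero => exact hs1
  | succ i ih => nlinarith [hs (i + 1), hD i]

theorem scale_add_one_le (hs1 : 1 ≤ s 1) (hs : ∀ i, s i * D i + 1 ≤ s (i + 1))
    (hD : ∀ i, 1 ≤ D (i + 1)) (i : ℕ) : s (i + 1) + 1 ≤ s (i + 2) := by
  nlinarith [hs (i + 1), hD i, one_le_scale hs1 hs hD i]

theorem monotone_scale (hs1 : 1 ≤ s 1) (hs : ∀ i, s i * D i + 1 ≤ s (i + 1))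
    (hD : ∀ i, 1 ≤ D (i + 1)) : Monotone fun i => s (i + 1) :=
  monotone_nat_of_le_succ fun i => by linarith [scale_add_one_le hs1 hs hD i]

theorem exists_le_scale (hs1 : 1 ≤ s 1) (hs : ∀ i, s i * D i + 1 ≤ s (i + 1))
    (hD : ∀ i, 1 ≤ D (i + 1)) (r : ℝ) : ∃ m, r ≤ s (m + 1) := by
  have hlin : ∀ m : ℕ, (m : ℝ) ≤ s (m + 1) := by
    intro m
    induction m with
    | zero => simpa using zero_le_one.trans hs1
    | succ m ih => push_cast; linarith [scale_add_one_le hs1 hs hD m]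
  obtain ⟨m, hm⟩ := exists_nat_ge r
  exact ⟨m, hm.trans (hlin m)⟩

theorem scale_mul_lt (hs1 : 1 ≤ s 1) (hs : ∀ i, s i * D i + 1 ≤ s (i + 1))
    (hD : ∀ i, 1 ≤ D (i + 1)) {k i : ℕ} (hki : k ≤ i) : s k * D k < s (i + 1) := by
  linarith [hs k, monotone_scale hs1 hs hD hki]

end ScalingSequence

section NormG

variable {G : ℕ → Type*} [∀ i, Group (G i)] {s : ℕ → ℝ} {N : ∀ i, G i → ℝ}
  {u : ∀ i, G i} {i : ℕ}

theorem kval_eq_of_forall_lt (hi : u i ≠ 1) (h : ∀ j, i < j → u j = 1) : kval u = i :=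
  IsGreatest.csSup_eq ⟨hi, fun j hj => not_lt.mp fun hij => hj (h j hij)⟩

theorem normG_eq_of_forall_lt (hi : u i ≠ 1) (h : ∀ j, i < j → u j = 1) :
    normG s N u = s i * N i (u i) := by
  rw [normG, kval_eq_of_forall_lt hi h]

theorem normG_one (hN : ∀ i, GroupNormOne (N i)) : normG s N (1 : ∀ i, G i) = 0 := by
  simp [normG, (hN _).map_one]

theorem exists_top_of_ne_one [Subsingleton (G 0)] (hu : u ∈ RProd G) (hne : u ≠ 1) :
    ∃ k, u (k + 1) ≠ 1 ∧ ∀ j, k + 1 < j → u j = 1 := by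
  have htop : kval u ∈ gsupp u := by
    obtain ⟨j, hj⟩ := Function.ne_iff.mp hne
    exact Nat.sSup_mem ⟨j, hj⟩ (Set.Finite.bddAbove hu)
  obtain ⟨k, hk⟩ : ∃ k, kval u = k + 1 := by
    refine Nat.exists_eq_succ_of_ne_zero fun h0 => htop ?_
    rw [h0]
    exact Subsingleton.elim _ _
  refine ⟨k, hk ▸ htop, fun j hj => not_not.mp fun hju => ?_⟩
  have : j ≤ kval u := le_csSup (Set.Finite.bddAbove hu) hju
  omega

end NormG

def vanishingAbove (G : ℕ → Type*) [∀ i, Group (G i)] (i : ℕ) : Subgroup (RProd G) :=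
  (Subgroup.pi {j | i < j} fun _ => ⊥).comap (RProd G).subtype

theorem mem_vanishingAbove {G : ℕ → Type*} [∀ i, Group (G i)] {i : ℕ} {u : RProd G} :
    u ∈ vanishingAbove G i ↔ ∀ j, i < j → (u : ∀ i, G i) j = 1 := by
  simp only [vanishingAbove, Subgroup.mem_comap, Subgroup.coe_subtype, Subgroup.mem_pi,
    Set.mem_ofPred_eq, Subgroup.mem_bot]

theorem vanishingAbove_zero (G : ℕ → Type*) [∀ i, Group (G i)] [Subsingleton (G 0)] :
    vanishingAbove G 0 = ⊥ := by
  refine (Subgroup.eq_bot_iff_forall _).mpr fun u hu => Subtype.ext (funext fun j => ?_)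
  rcases j with _ | j
  · exact Subsingleton.elim _ _
  · exact mem_vanishingAbove.mp hu (j + 1) j.succ_pos

theorem one_le_gdiam_succ {G : ℕ → Type*} [∀ i, Group (G i)] [∀ i, Finite (G i)]
    [∀ i, Nontrivial (G (i + 1))] {N : ∀ i, G i → ℝ} (hN : ∀ i, GroupNormOne (N i)) (i : ℕ) :
    1 ≤ gdiam (N (i + 1)) :=
  (hN (i + 1)).one_le_gdiam

section ScaledNorm

variable {G : ℕ → Type*} [∀ i, Group (G i)] [Subsingleton (G 0)] [∀ i, Finite (G i)]
  [∀ i, Nontrivial (G (i + 1))] {s : ℕ → ℝ} {N : ∀ i, G i → ℝ} {u : ∀ i, G i} {i : ℕ}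

theorem exists_top_normG_bounds (hN : ∀ i, GroupNormOne (N i)) (hs1 : 1 ≤ s 1)
    (hs : ∀ i, s i * gdiam (N i) + 1 ≤ s (i + 1)) (hu : u ∈ RProd G) (hne : u ≠ 1) :
    ∃ k, u (k + 1) ≠ 1 ∧ (∀ j, k + 1 < j → u j = 1) ∧ s (k + 1) ≤ normG s N u ∧
      normG s N u ≤ s (k + 1) * gdiam (N (k + 1)) := by
  obtain ⟨k, hk, htop⟩ := exists_top_of_ne_one hu hne
  have hsk := one_le_scale hs1 hs (one_le_gdiam_succ hN) k
  refine ⟨k, hk, htop, ?_, ?_⟩ <;> rw [normG_eq_of_forall_lt hk htop]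
  · nlinarith [(hN (k + 1)).one_le hk]
  · nlinarith [le_gdiam (N (k + 1)) (u (k + 1))]

theorem normG_nonneg (hN : ∀ i, GroupNormOne (N i)) (hs1 : 1 ≤ s 1)
    (hs : ∀ i, s i * gdiam (N i) + 1 ≤ s (i + 1)) (hu : u ∈ RProd G) : 0 ≤ normG s N u := by
  rcases eq_or_ne u 1 with rfl | hne
  · exact (normG_one hN).ge
  · obtain ⟨k, -, -, hlow, -⟩ := exists_top_normG_bounds hN hs1 hs hu hne
    linarith [one_le_scale hs1 hs (one_le_gdiam_succ hN) k]

theorem mem_vanishingAbove_of_normG_lt (hN : ∀ i, GroupNormOne (N i)) (hs1 : 1 ≤ s 1)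
    (hs : ∀ i, s i * gdiam (N i) + 1 ≤ s (i + 1)) {g : RProd G}
    (hg : normG s N (g : ∀ i, G i) < s (i + 1)) : g ∈ vanishingAbove G i := by
  refine mem_vanishingAbove.mpr fun j hij => not_not.mp fun hj => ?_
  obtain ⟨k, -, htop, hlow, -⟩ :=
    exists_top_normG_bounds hN hs1 hs g.2 (fun h => hj (by simp [h]))
  have hik : i ≤ k := by
    by_contra! hki
    exact hj (htop j (by omega))
  linarith [monotone_scale hs1 hs (one_le_gdiam_succ hN) hik]

theorem scale_mul_le_normG (hN : ∀ i, GroupNormOne (N i)) (hs1 : 1 ≤ s 1)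
    (hs : ∀ i, s i * gdiam (N i) + 1 ≤ s (i + 1)) (hu : u ∈ RProd G)
    (h : ∀ j, i < j → u j = 1) : s i * N i (u i) ≤ normG s N u := by
  rcases eq_or_ne (u i) 1 with hi | hi
  · rw [hi, (hN i).map_one, mul_zero]
    exact normG_nonneg hN hs1 hs hu
  · exact (normG_eq_of_forall_lt hi h).ge

theorem normG_le_max (hN : ∀ i, GroupNormOne (N i)) (hs1 : 1 ≤ s 1)
    (hs : ∀ i, s i * gdiam (N i) + 1 ≤ s (i + 1)) (hu : u ∈ RProd G)
    (h : ∀ j, i + 1 < j → u j = 1) :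
    normG s N u ≤ max (s (i + 1) * N (i + 1) (u (i + 1))) (s (i + 1)) := by
  rcases eq_or_ne (u (i + 1)) 1 with hi | hi
  · refine le_max_of_le_right ?_
    rcases eq_or_ne u 1 with rfl | hne
    · rw [normG_one hN]
      linarith [one_le_scale hs1 hs (one_le_gdiam_succ hN) i]
    obtain ⟨k, hk, htop, -, hup⟩ := exists_top_normG_bounds hN hs1 hs hu hne
    have hki : k + 1 ≤ i := by
      by_contra! hik
      rcases (show i + 1 < k + 1 ∨ k = i by omega) with hlt | rfl
      · exact hk (h _ hlt)
      · exact hk hi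
    linarith [scale_mul_lt hs1 hs (one_le_gdiam_succ hN) hki]
  · exact le_max_of_le_left (normG_eq_of_forall_lt hi h).le

end ScaledNorm

section Chains

variable {G : ℕ → Type*} [∀ i, Group (G i)] [Subsingleton (G 0)] [∀ i, Finite (G i)]
  [∀ i, Nontrivial (G (i + 1))] {s : ℕ → ℝ} {N : ∀ i, G i → ℝ} {r : ℝ} {i : ℕ}
  {U : Set (RProd G)} {x y : RProd G}

theorem inv_mul_mem_vanishingAbove (hN : ∀ i, GroupNormOne (N i)) (hs1 : 1 ≤ s 1)
    (hs : ∀ i, s i * gdiam (N i) + 1 ≤ s (i + 1)) (hr : r ≤ s (i + 1))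
    (h : ScaleChain (fun a b : RProd G => normG s N ((a⁻¹ * b : RProd G) : ∀ i, G i)) r U x y) :
    x⁻¹ * y ∈ vanishingAbove G i :=
  h.inv_mul_mem _ fun _ hu => mem_vanishingAbove_of_normG_lt hN hs1 hs (hu.trans_le hr)

theorem eq_of_scaleChain_of_le_scale_one (hN : ∀ i, GroupNormOne (N i)) (hs1 : 1 ≤ s 1)
    (hs : ∀ i, s i * gdiam (N i) + 1 ≤ s (i + 1)) (hr : r ≤ s 1)
    (h : ScaleChain (fun a b : RProd G => normG s N ((a⁻¹ * b : RProd G) : ∀ i, G i)) r U x y) :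
    x = y := by
  have hxy := inv_mul_mem_vanishingAbove hN hs1 hs (i := 0) hr h
  rwa [vanishingAbove_zero, Subgroup.mem_bot, inv_mul_eq_one] at hxy

theorem normG_le_of_scaleChain_preimage (hN : ∀ i, GroupNormOne (N i)) (hs1 : 1 ≤ s 1)
    (hs : ∀ i, s i * gdiam (N i) + 1 ≤ s (i + 1)) {C : ℝ} (hC : 1 ≤ C)
    (hir : s (i + 1) < r) (hri : r ≤ s (i + 2)) {V : Set (G (i + 1))}
    (hV : ∀ a b, ScaleChain (fun a b => N (i + 1) (a⁻¹ * b)) (r / s (i + 1)) V a b →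
      N (i + 1) (a⁻¹ * b) ≤ C * (r / s (i + 1)))
    (h : ScaleChain (fun a b : RProd G => normG s N ((a⁻¹ * b : RProd G) : ∀ i, G i)) r
      ((fun g : RProd G => (g : ∀ i, G i) (i + 1)) ⁻¹' V) x y) :
    normG s N ((x⁻¹ * y : RProd G) : ∀ i, G i) ≤ C * r := by
  have hsi : 0 < s (i + 1) := by linarith [one_le_scale hs1 hs (one_le_gdiam_succ hN) i]
  -- a step of size `< r` changes the `(i+1)`-st coordinate by less than `r / s (i+1)`
  have hlevel := hV _ _ <| h.map fun a b hab => by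
    rw [lt_div_iff₀ hsi, mul_comm]
    exact (scale_mul_le_normG hN hs1 hs (a⁻¹ * b).2 (mem_vanishingAbove.mp
      (mem_vanishingAbove_of_normG_lt hN hs1 hs (hab.trans_le hri)))).trans_lt hab
  refine (normG_le_max hN hs1 hs (x⁻¹ * y).2 (mem_vanishingAbove.mp
    (inv_mul_mem_vanishingAbove hN hs1 hs hri h))).trans (max_le ?_ (by nlinarith))
  calc s (i + 1) * N (i + 1) (((x⁻¹ * y : RProd G) : ∀ i, G i) (i + 1))
      ≤ s (i + 1) * (C * (r / s (i + 1))) := mul_le_mul_of_nonneg_left hlevel hsi.le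
    _ = C * r := by field_simp

end Chains

/-- If there is a uniform constant `C ≥ 1` such that each factor `(Gᵢ, d_{Gᵢ})` has, for
every scale `t ∈ (1, diam Gᵢ]`, a cover by `n+1` sets whose `t`-scale connected components
are `C·t`-bounded, then the direct sum with the quasi-ultrametric has `asdim_AN ≤ n`. -/
theorem asdimAN_le_of_uniform_covers (G : ℕ → Type*) [∀ i, Group (G i)]
    [∀ i, Fintype (G i)] [Subsingleton (G 0)] [∀ i, Nontrivial (G (i + 1))]
    (N : ∀ i, G i → ℝ) (hN : ∀ i, GroupNormOne (N i))
    (s : ℕ → ℝ) (hs1 : 1 ≤ s 1)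
    (hs : ∀ i, s i * gdiam (N i) + 1 ≤ s (i + 1))
    (n : ℕ) (C : ℝ) (hC : 1 ≤ C)
    (hcov : ∀ (i : ℕ) (t : ℝ), 1 < t → t ≤ gdiam (N i) →
      ∃ U : Fin (n + 1) → Set (G i), (∀ x, ∃ j, x ∈ U j) ∧
        ∀ j x y, ScaleChain (fun a b : G i => N i (a⁻¹ * b)) t (U j) x y →
          N i (x⁻¹ * y) ≤ C * t) :
    ANdimLE (fun g h : RProd G => normG s N (((g : ∀ i, G i))⁻¹ * (h : ∀ i, G i))) n := by
  refine ⟨C, by linarith, 0, fun r hr => ?_⟩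
  simp only [add_zero]
  rcases exists_le_zero_or_lt_le_succ (exists_le_scale hs1 hs (one_le_gdiam_succ hN)) r with
    hr1 | ⟨i, hir, hri⟩
  · refine ⟨fun _ => Set.univ, fun _ => ⟨0, trivial⟩, fun _ x y hxy => ?_⟩
    obtain rfl := eq_of_scaleChain_of_le_scale_one hN hs1 hs hr1 hxy
    rw [inv_mul_cancel, normG_one hN]
    positivity
  · obtain ⟨U, hUcov, hU⟩ := exists_cover_of_one_lt (fun _ _ => le_gdiam _ _) hC (hcov (i + 1))
      ((one_lt_div (by linarith [one_le_scale hs1 hs (one_le_gdiam_succ hN) i])).mpr hir)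
    exact ⟨fun j => (fun g : RProd G => (g : ∀ i, G i) (i + 1)) ⁻¹' U j, fun g => hUcov _,
      fun j x y hxy => normG_le_of_scaleChain_preimage hN hs1 hs hC hir hri (hU j) hxy⟩
end

section
/- For each natural number n there is a constant Cₙ ≥ 1 such that for every k > 1 and every s > 0, the group ℤ_kⁿ with the ℓ¹-sum of the canonical word metrics on ℤ_k admits a cover {U₀,...,Uₙ} by n+1 sets whose s-scale connected components are Cₙ·s-bounded. -/
/-- The canonical word metric on `ZMod k`. -/
noncomputable def zmodDist (k : ℕ) (a b : ZMod k) : ℝ :=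
  ((min ((a - b).val) (k - (a - b).val) : ℕ) : ℝ)

/-- nat-valued version -/
def zd (k : ℕ) (a b : ZMod k) : ℕ := min ((a - b).val) (k - (a - b).val)

lemma zmodDist_eq_zd (k : ℕ) (a b : ZMod k) : zmodDist k a b = (zd k a b : ℝ) := rfl

lemma zd_nonneg (k : ℕ) (a b : ZMod k) : (0:ℝ) ≤ zmodDist k a b := Nat.cast_nonneg _

lemma zd_eq_zero {k : ℕ} (hk : 0 < k) {a b : ZMod k} (h : zd k a b = 0) : a = b := by
  haveI : NeZero k := ⟨hk.ne'⟩
  have hv : (a - b).val < k := ZMod.val_lt _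
  have : (a - b).val = 0 := by unfold zd at h; omega
  have := (ZMod.val_eq_zero (a - b)).mp this
  linear_combination (norm := ring_nf) this
  -- a - b = 0 → a = b

lemma zd_le_half {k : ℕ} (hk : 0 < k) (a b : ZMod k) : 2 * zd k a b ≤ k := by
  haveI : NeZero k := ⟨hk.ne'⟩
  have hv : (a - b).val < k := ZMod.val_lt _
  unfold zd; omega

lemma zd_le_of_lift {k la lb : ℕ} (hk : 0 < k) {a b : ZMod k}
    (ha : (la : ZMod k) = a) (hb : (lb : ZMod k) = b) (h : lb ≤ la) (hlt : la - lb < k) :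
    zd k a b ≤ la - lb := by
  haveI : NeZero k := ⟨hk.ne'⟩
  have : a - b = ((la - lb : ℕ) : ZMod k) := by
    rw [Nat.cast_sub h, ha, hb]
  have hv : (a - b).val = la - lb := by rw [this, ZMod.val_cast_of_lt hlt]
  unfold zd; omega

lemma zd_cases {k t : ℕ} (hk : 0 < k) {a b : ZMod k} (h : zd k a b < t) :
    (a.val ≤ b.val ∧ b.val < a.val + t) ∨ (b.val ≤ a.val ∧ a.val < b.val + t) ∨
    (a.val + k < b.val + t) ∨ (b.val + k < a.val + t) := by
  haveI : NeZero k := ⟨hk.ne'⟩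
  have hv : (a - b).val < k := ZMod.val_lt _
  have hp : a.val < k := ZMod.val_lt _
  have hq : b.val < k := ZMod.val_lt _
  have key : a.val = (b.val + (a - b).val) % k := by
    conv_lhs => rw [show a = b + (a - b) by ring]
    rw [ZMod.val_add]
  have : a.val = b.val + (a - b).val ∨ a.val + k = b.val + (a - b).val := by
    rcases Nat.lt_or_ge (b.val + (a - b).val) k with h' | h'
    · left; rw [key, Nat.mod_eq_of_lt h']
    · right
      have h2 : b.val + (a - b).val < 2 * k := by omega
      have h3 : (b.val + (a - b).val) % k = b.val + (a - b).val - k := by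
        rw [Nat.mod_eq_sub_mod h', Nat.mod_eq_of_lt (by omega)]
      omega
  unfold zd at h
  omega

lemma zd_comm {k : ℕ} (hk : 0 < k) (a b : ZMod k) : zd k a b = zd k b a := by
  haveI : NeZero k := ⟨hk.ne'⟩
  have h1 : b - a = -(a - b) := by ring
  have h2 : (a - b).val < k := ZMod.val_lt _
  rw [zd, zd, h1, ZMod.neg_val]
  split_ifs with h
  · rw [h, ZMod.val_zero]
  · have h3 : (a - b).val ≠ 0 := fun hc => h ((ZMod.val_eq_zero _).mp hc)
    omega

/-- arc index of position `p` on the circle of circumference `k`, arcs of length `P`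
(last arc possibly longer). -/
def zArc (P M p : ℕ) : ℕ := min (p / P) (M - 1)
/-- offset within the arc -/
def zO (P M p : ℕ) : ℕ := p - zArc P M p * P
/-- `p` avoids the `i`-th bad band of its arc -/
def zGood (t P M i p : ℕ) : Prop := ¬ (i * t ≤ zO P M p ∧ zO P M p < i * t + t)
/-- block index for shift `i` -/
def zBlk (t P M i p : ℕ) : ℕ :=
  if zO P M p < i * t then (if zArc P M p = 0 then M - 1 else zArc P M p - 1)
  else zArc P M p

lemma zArc_spec {k P M p : ℕ} (hP : 0 < P) (hMP : M * P ≤ k) (hkM : k < M * P + P)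
    (hM : 2 ≤ M) (hp : p < k) :
    zArc P M p * P ≤ p ∧ zArc P M p ≤ M - 1 ∧
    (zArc P M p < M - 1 → p < zArc P M p * P + P) ∧
    (zArc P M p = M - 1 → (M - 1) * P ≤ p) ∧
    p < zArc P M p * P + 2 * P := by
  have hd := Nat.div_add_mod p P
  have hm := Nat.mod_lt p hP
  have hMP' : (M - 1) * P + P = M * P := by
    have : M - 1 + 1 = M := by omega
    calc (M-1)*P + P = (M-1+1)*P := by ring
    _ = M * P := by rw [this]
  rcases le_or_gt (p / P) (M - 1) with h | h
  · have ha : zArc P M p = p / P := by unfold zArc; omega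
    have h2 : (p / P) * P = P * (p / P) := by ring
    rw [ha]
    have h3 : p / P ≤ M - 1 := h
    have h4 : p / P * P ≤ (M-1) * P := Nat.mul_le_mul_right P h3
    constructor
    · omega
    refine ⟨by omega, by intro _; omega, ?_, by omega⟩
    · intro he; rw [← he]; omega
  · have ha : zArc P M p = M - 1 := by unfold zArc; omega
    have h3 : M - 1 ≤ p / P := by omega
    have h4 : (M - 1) * P ≤ (p / P) * P := Nat.mul_le_mul_right P h3
    have h5 : (p / P) * P = P * (p / P) := by ring
    rw [ha]
    refine ⟨by omega, le_refl _, by omega, fun _ => by omega, by omega⟩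

section Circle
variable {n k t P M : ℕ}

/-- Standing hypotheses for the circle construction. -/
structure CircleCtx (n k t P M : ℕ) : Prop where
  ht : 1 ≤ t
  hPt : P = n * t + t
  h4P : 4 * P ≤ k
  hMdef : M = k / P

namespace CircleCtx

lemma hP (ctx : CircleCtx n k t P M) : 0 < P := by have := ctx.ht; have := ctx.hPt; omega
lemma hMP (ctx : CircleCtx n k t P M) : M * P ≤ k := by rw [ctx.hMdef, Nat.mul_comm]; exact Nat.mul_div_le k P
lemma hkM (ctx : CircleCtx n k t P M) : k < M * P + P := by
  have hd := Nat.div_add_mod k P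
  have hm := Nat.mod_lt k ctx.hP
  have : M * P = P * (k / P) := by rw [ctx.hMdef]; ring
  omega
lemma hM (ctx : CircleCtx n k t P M) : 4 ≤ M := by
  rw [ctx.hMdef]
  exact (Nat.le_div_iff_mul_le ctx.hP).mpr ctx.h4P

lemma blk_eq_of_le (ctx : CircleCtx n k t P M) {i p q : ℕ} (hi : i ≤ n) (hp : p < k) (hq : q < k)
    (hpq : p ≤ q) (hcl : q < p + t)
    (hgp : zGood t P M i p) (hgq : zGood t P M i q) :
    zBlk t P M i p = zBlk t P M i q := by
  obtain ⟨sp1, sp2, sp3, sp4, sp5⟩ := zArc_spec ctx.hP ctx.hMP ctx.hkM (by have := ctx.hM; omega) hp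
  obtain ⟨sq1, sq2, sq3, sq4, sq5⟩ := zArc_spec ctx.hP ctx.hMP ctx.hkM (by have := ctx.hM; omega) hq
  set mp := zArc P M p with hmp
  set mq := zArc P M q with hmq
  have hop : zO P M p = p - mp * P := rfl
  have hoq : zO P M q = q - mq * P := rfl
  have hM := ctx.hM
  have hP := ctx.hP
  have ht := ctx.ht
  have hPt := ctx.hPt
  have hit : i * t ≤ n * t := Nat.mul_le_mul_right t hi
  have hit1 : 1 ≤ i → t ≤ i * t := fun h => le_trans (by omega) (Nat.mul_le_mul_right t h)
  -- mp ≤ mq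
  have hmono : mp ≤ mq := by
    by_contra hcon
    have h1 : mq < M - 1 := by omega
    have h2 : mq * P + P ≤ mp * P := by
      have : mq + 1 ≤ mp := by omega
      calc mq * P + P = (mq + 1) * P := by ring
        _ ≤ mp * P := Nat.mul_le_mul_right P this
    have := sq3 h1
    omega
  -- mq ≤ mp + 1
  have hstep : mq ≤ mp + 1 := by
    by_contra hcon
    have h1 : mp < M - 1 := by omega
    have h2 : mp * P + 2 * P ≤ mq * P := by
      have : mp + 2 ≤ mq := by omega
      calc mp * P + 2 * P = (mp + 2) * P := by ring
        _ ≤ mq * P := Nat.mul_le_mul_right P this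
    have := sp3 h1
    omega
  unfold zGood at hgp hgq
  rw [hop] at hgp
  rw [hoq] at hgq
  unfold zBlk
  rw [← hmp, ← hmq]
  rcases Nat.eq_or_lt_of_le hmono with heq | hlt
  · -- same arc
    have heqP : mp * P = mq * P := by rw [heq]
    split_ifs <;> omega
  · -- mq = mp + 1
    have hmq1 : mq = mp + 1 := by omega
    have hmplt : mp < M - 1 := by omega
    have hppt := sp3 hmplt
    have hqP : mq * P = mp * P + P := by rw [hmq1]; ring
    have hi1 : 1 ≤ i := by
      by_contra hcon
      have : i = 0 := by omega
      rw [this] at hgq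
      omega
    have hti := hit1 hi1
    split_ifs <;> omega

lemma blk_eq_of_wrap (ctx : CircleCtx n k t P M) {i p q : ℕ} (hi : i ≤ n)
    (hp : p < k) (hq : q < k) (hw : q + k < p + t)
    (hgp : zGood t P M i p) (hgq : zGood t P M i q) :
    zBlk t P M i p = zBlk t P M i q := by
  obtain ⟨sp1, sp2, sp3, sp4, sp5⟩ := zArc_spec ctx.hP ctx.hMP ctx.hkM (by have := ctx.hM; omega) hp
  set mp := zArc P M p with hmp
  have hM := ctx.hM
  have hP := ctx.hP
  have ht := ctx.ht
  have hPt := ctx.hPt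
  have hMP := ctx.hMP
  have hkM := ctx.hkM
  have h4P := ctx.h4P
  have hit : i * t ≤ n * t := Nat.mul_le_mul_right t hi
  have hM1P : (M - 1) * P + P = M * P := by
    have : M - 1 + 1 = M := by omega
    calc (M-1)*P + P = (M-1+1)*P := by ring
      _ = M * P := by rw [this]
  have hop : zO P M p = p - mp * P := rfl
  have hqt : q < t := by omega
  -- p is in the last arc
  have hmpl : mp = M - 1 := by
    by_contra hcon
    have h1 : mp < M - 1 := by omega
    have h2 : mp * P + P ≤ (M - 1) * P := by
      have : mp + 1 ≤ M - 1 := by omega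
      calc mp * P + P = (mp + 1) * P := by ring
        _ ≤ (M - 1) * P := Nat.mul_le_mul_right P this
    have := sp3 h1
    omega
  have hM1p : (M - 1) * P ≤ p := sp4 hmpl
  have hopbig : n * t < zO P M p := by
    rw [hop, hmpl]
    omega
  -- q is in arc 0
  have hmq0 : zArc P M q = 0 := by
    unfold zArc
    have : q / P = 0 := Nat.div_eq_of_lt (by omega)
    omega
  have hoq : zO P M q = q := by
    rw [zO, hmq0]
    omega
  unfold zGood at hgp hgq
  rw [hoq] at hgq
  have hi1 : 1 ≤ i := by
    by_contra hcon
    have : i = 0 := by omega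
    rw [this] at hgq
    omega
  have hti : t ≤ i * t := le_trans (by omega) (Nat.mul_le_mul_right t hi1)
  unfold zBlk
  rw [← hmp, hoq, hmq0, if_pos (by omega : q < i * t), if_pos rfl, if_neg (by omega : ¬ zO P M p < i * t), hmpl]

/-- the block with a given index is contained in a circular interval of length `3P`:
every point of it has a lift in `[bP, bP+3P)`. -/
lemma blk_lift (ctx : CircleCtx n k t P M) {i p : ℕ} (hi : i ≤ n) (hp : p < k) :
    ∃ l : ℕ, (l = p ∨ l = p + k) ∧
      zBlk t P M i p * P ≤ l ∧ l < zBlk t P M i p * P + 3 * P := by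
  obtain ⟨sp1, sp2, sp3, sp4, sp5⟩ := zArc_spec ctx.hP ctx.hMP ctx.hkM (by have := ctx.hM; omega) hp
  set mp := zArc P M p with hmp
  have hM := ctx.hM
  have hP := ctx.hP
  have ht := ctx.ht
  have hPt := ctx.hPt
  have hMP := ctx.hMP
  have hkM := ctx.hkM
  have hit : i * t ≤ n * t := Nat.mul_le_mul_right t hi
  have hop : zO P M p = p - mp * P := rfl
  have hM1P : (M - 1) * P + P = M * P := by
    have : M - 1 + 1 = M := by omega
    calc (M-1)*P + P = (M-1+1)*P := by ring
      _ = M * P := by rw [this]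
  unfold zBlk
  rw [← hmp]
  split_ifs with h1 h2
  · -- o < i*t, mp = 0 : block M-1, lift p + k
    have h2P : mp * P = 0 := by rw [h2, Nat.zero_mul]
    refine ⟨p + k, Or.inr rfl, ?_, ?_⟩
    · omega
    · omega
  · -- o < i*t, mp ≥ 1 : block mp - 1
    refine ⟨p, Or.inl rfl, ?_, ?_⟩
    · have : (mp - 1) * P ≤ mp * P := Nat.mul_le_mul_right P (by omega)
      omega
    · have : (mp - 1) * P + P = mp * P := by
        have h3 : mp - 1 + 1 = mp := by omega
        calc (mp-1)*P + P = (mp-1+1)*P := by ring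
          _ = mp * P := by rw [h3]
      omega
  · -- o ≥ i*t : block mp
    exact ⟨p, Or.inl rfl, by omega, by omega⟩

lemma hk0 (ctx : CircleCtx n k t P M) : 0 < k := by
  have := ctx.h4P; have := ctx.hP; omega

lemma zd_blk_eq (ctx : CircleCtx n k t P M) {i : ℕ} (hi : i ≤ n) {a b : ZMod k}
    (hga : zGood t P M i a.val) (hgb : zGood t P M i b.val) (h : zd k a b < t) :
    zBlk t P M i a.val = zBlk t P M i b.val := by
  haveI : NeZero k := ⟨ctx.hk0.ne'⟩
  have hp : a.val < k := ZMod.val_lt _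
  have hq : b.val < k := ZMod.val_lt _
  rcases zd_cases ctx.hk0 h with ⟨h1, h2⟩ | ⟨h1, h2⟩ | h1 | h1
  · exact ctx.blk_eq_of_le hi hp hq h1 h2 hga hgb
  · exact (ctx.blk_eq_of_le hi hq hp h1 h2 hgb hga).symm
  · exact (ctx.blk_eq_of_wrap hi hq hp h1 hgb hga).symm
  · exact ctx.blk_eq_of_wrap hi hp hq h1 hga hgb

lemma zd_le_of_blk_eq (ctx : CircleCtx n k t P M) {i : ℕ} (hi : i ≤ n) {a b : ZMod k}
    (h : zBlk t P M i a.val = zBlk t P M i b.val) : zd k a b ≤ 3 * P := by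
  haveI : NeZero k := ⟨ctx.hk0.ne'⟩
  have hp : a.val < k := ZMod.val_lt _
  have hq : b.val < k := ZMod.val_lt _
  obtain ⟨la, hla, h1a, h2a⟩ := ctx.blk_lift hi hp (i := i)
  obtain ⟨lb, hlb, h1b, h2b⟩ := ctx.blk_lift hi hq (i := i)
  rw [h] at h1a h2a
  have hca : ((la : ℕ) : ZMod k) = a := by
    rcases hla with h' | h' <;> rw [h'] <;> push_cast <;>
      simp [ZMod.natCast_self, ZMod.natCast_rightInverse a]
  have hcb : ((lb : ℕ) : ZMod k) = b := by
    rcases hlb with h' | h' <;> rw [h'] <;> push_cast <;>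
      simp [ZMod.natCast_self, ZMod.natCast_rightInverse b]
  have h3P : 3 * P < k := by have := ctx.h4P; have := ctx.hP; omega
  rcases le_total lb la with hle | hle
  · have := zd_le_of_lift ctx.hk0 hca hcb hle (by omega)
    omega
  · have := zd_le_of_lift ctx.hk0 hcb hca hle (by omega)
    rw [zd_comm ctx.hk0] at this
    omega

end CircleCtx
end Circle

lemma zd_self (k : ℕ) (a : ZMod k) : zd k a a = 0 := by
  simp [zd]

lemma bad_unique {t i i' o : ℕ} (ht : 1 ≤ t) (h1 : i * t ≤ o) (h2 : o < i * t + t)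
    (h3 : i' * t ≤ o) (h4 : o < i' * t + t) : i = i' := by
  rcases Nat.lt_trichotomy i i' with h | h | h
  · have h5 : (i + 1) * t ≤ i' * t := Nat.mul_le_mul_right t (by omega)
    have h6 : (i + 1) * t = i * t + t := by ring
    omega
  · exact h
  · have h5 : (i' + 1) * t ≤ i * t := Nat.mul_le_mul_right t (by omega)
    have h6 : (i' + 1) * t = i' * t + t := by ring
    omega

lemma exists_good_shift {k t P M n : ℕ} (ht : 1 ≤ t) (x : Fin n → ZMod k) :
    ∃ i : Fin (n + 1), ∀ j, zGood t P M i.val ((x j).val) := by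
  classical
  set F : Fin n → Fin (n + 1) := fun j =>
    if h : ∃ i : Fin (n + 1), ¬ zGood t P M i.val ((x j).val) then h.choose else 0 with hF
  have hns : ¬ Function.Surjective F := by
    intro hsurj
    have := Fintype.card_le_of_surjective F hsurj
    simp [Fintype.card_fin] at this
  simp only [Function.Surjective, not_forall] at hns
  obtain ⟨i, hi⟩ := hns
  push_neg at hi
  refine ⟨i, fun j => ?_⟩
  by_contra hbad
  have hex : ∃ i' : Fin (n + 1), ¬ zGood t P M i'.val ((x j).val) := ⟨i, hbad⟩
  have hspec := hex.choose_spec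
  have heq : hex.choose = i := by
    unfold zGood at hspec hbad
    rw [not_not] at hspec hbad
    apply Fin.ext
    exact bad_unique ht hspec.1 hspec.2 hbad.1 hbad.2
  apply hi j
  rw [hF]
  simp only [dif_pos hex]
  exact heq

/-- For each `n` there is `Cₙ ≥ 1` such that for every `k > 1` and every `s > 0`,
`ℤ_kⁿ` with the `ℓ¹`-sum of canonical word metrics admits a cover by `n+1` sets whose
`s`-scale connected components are `Cₙ·s`-bounded. -/
theorem zmod_pow_uniform_control (n : ℕ) :
    ∃ C : ℝ, 1 ≤ C ∧ ∀ k : ℕ, 1 < k →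
      IsControlFun (fun x y : Fin n → ZMod k => ∑ i, zmodDist k (x i) (y i)) n
        (fun s => C * s) := by
  refine ⟨((8 * (n + 1) ^ 2 : ℕ) : ℝ), ?_, ?_⟩
  · have : (0 : ℕ) < 8 * (n + 1) ^ 2 := by positivity
    exact_mod_cast this
  intro k hk s hs
  have hk0 : 0 < k := by omega
  have hCs : (0:ℝ) < ((8 * (n + 1) ^ 2 : ℕ) : ℝ) * s := by
    apply mul_pos _ hs
    have : (0 : ℕ) < 8 * (n + 1) ^ 2 := by positivity
    exact_mod_cast this
  by_cases hs1 : s ≤ 1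
  · -- trivial case: chains are constant
    refine ⟨fun _ => Set.univ, fun x => ⟨0, trivial⟩, ?_⟩
    rintro i x y ⟨m, c, hc0, hcm, _, hstep⟩
    have hconst : ∀ l, l ≤ m → c l = c 0 := by
      intro l
      induction l with
      | zero => intro _; rfl
      | succ l ih =>
        intro hl
        have hstepl := hstep l (by omega)
        have hcc : c (l + 1) = c l := by
          funext j
          have h1 : zmodDist k (c l j) (c (l + 1) j) ≤
              ∑ j', zmodDist k (c l j') (c (l + 1) j') :=
            Finset.single_le_sum (fun j' _ => zd_nonneg k _ _) (Finset.mem_univ j)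
          have h2 : (zd k (c l j) (c (l + 1) j) : ℝ) < 1 := by
            rw [← zmodDist_eq_zd]
            calc zmodDist k (c l j) (c (l + 1) j) ≤ _ := h1
              _ < s := hstepl
              _ ≤ 1 := hs1
          have h3 : zd k (c l j) (c (l + 1) j) = 0 := by exact_mod_cast Nat.lt_one_iff.mp (by exact_mod_cast h2)
          exact (zd_eq_zero hk0 h3).symm
        rw [hcc]
        exact ih (by omega)
    have hxy : x = y := by rw [← hc0, ← hcm, hconst m le_rfl]
    rw [hxy]
    show (∑ j, zmodDist k (y j) (y j)) ≤ _
    have hz : (∑ j, zmodDist k (y j) (y j)) = 0 :=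
      Finset.sum_eq_zero (fun j _ => by rw [zmodDist_eq_zd, zd_self]; simp)
    rw [hz]
    exact hCs.le
  · push_neg at hs1
    set t := ⌈s⌉₊ with htdef
    have ht1 : 1 ≤ t := Nat.one_le_ceil_iff.mpr hs
    have hst : s ≤ (t : ℝ) := Nat.le_ceil s
    have ht2s : (t : ℝ) ≤ 2 * s := by
      have := Nat.ceil_lt_add_one hs.le
      have : (t : ℝ) < s + 1 := this
      nlinarith
    set P := n * t + t with hPdef
    by_cases hkP : k < 4 * P
    · -- small circle: trivial cover, diameter bound
      refine ⟨fun _ => Set.univ, fun x => ⟨0, trivial⟩, ?_⟩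
      rintro i x y -
      have hterm : ∀ j : Fin n, zmodDist k (x j) (y j) ≤ (k : ℝ) / 2 := by
        intro j
        have := zd_le_half hk0 (x j) (y j)
        rw [zmodDist_eq_zd]
        have : (2 * zd k (x j) (y j) : ℝ) ≤ (k : ℝ) := by exact_mod_cast this
        linarith
      calc ∑ j, zmodDist k (x j) (y j) ≤ ∑ _j : Fin n, (k : ℝ) / 2 :=
            Finset.sum_le_sum (fun j _ => hterm j)
        _ = n * ((k : ℝ) / 2) := by rw [Finset.sum_const, Finset.card_univ, Fintype.card_fin]; ring
        _ ≤ ((8 * (n + 1) ^ 2 : ℕ) : ℝ) * s := by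
            have hkr : (k : ℝ) ≤ 4 * ((n : ℝ) * t + t) := by
              have : (k : ℝ) ≤ (4 * P : ℕ) := by exact_mod_cast hkP.le
              rw [hPdef] at this
              push_cast at this
              linarith
            have hn0 : (0:ℝ) ≤ (n:ℝ) := Nat.cast_nonneg n
            have ht0 : (0:ℝ) ≤ (t:ℝ) := Nat.cast_nonneg t
            push_cast
            nlinarith [mul_nonneg hn0 ht0, mul_nonneg hn0 (mul_nonneg hn0 ht0)]
    · -- main case
      push_neg at hkP
      have ctx : CircleCtx n k t P (k / P) := ⟨ht1, rfl, hkP, rfl⟩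
      refine ⟨fun i => {x | ∀ j, zGood t P (k / P) i.val ((x j).val)}, ?_, ?_⟩
      · intro x
        exact exists_good_shift ht1 x
      · rintro i x y ⟨m, c, hc0, hcm, hmem, hstep⟩
        have hin : i.val ≤ n := Nat.lt_succ_iff.mp i.isLt
        have hblk : ∀ l, l ≤ m → ∀ j,
            zBlk t P (k / P) i.val ((c l j).val) = zBlk t P (k / P) i.val ((c 0 j).val) := by
          intro l
          induction l with
          | zero => intro _ _; rfl
          | succ l ih =>
            intro hl j
            have hstepl := hstep l (by omega)
            have h1 : zmodDist k (c l j) (c (l + 1) j) ≤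
                ∑ j', zmodDist k (c l j') (c (l + 1) j') :=
              Finset.single_le_sum (fun j' _ => zd_nonneg k _ _) (Finset.mem_univ j)
            have h2 : (zd k (c l j) (c (l + 1) j) : ℝ) < (t : ℝ) := by
              rw [← zmodDist_eq_zd]
              calc zmodDist k (c l j) (c (l + 1) j) ≤ _ := h1
                _ < s := hstepl
                _ ≤ (t:ℝ) := hst
            have h3 : zd k (c l j) (c (l + 1) j) < t := by exact_mod_cast h2
            have hgl := hmem l (by omega) j
            have hgl1 := hmem (l + 1) (by omega) j
            have := ctx.zd_blk_eq hin hgl hgl1 h3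
            rw [← this]
            exact ih (by omega) j
        have hfin : ∀ j : Fin n, zd k (x j) (y j) ≤ 3 * P := by
          intro j
          have h1 := hblk m le_rfl j
          rw [hcm, hc0] at h1
          exact ctx.zd_le_of_blk_eq hin h1.symm
        calc ∑ j, zmodDist k (x j) (y j) ≤ ∑ _j : Fin n, ((3 * P : ℕ) : ℝ) := by
              apply Finset.sum_le_sum
              intro j _
              rw [zmodDist_eq_zd]
              exact_mod_cast hfin j
          _ = n * ((3 * P : ℕ) : ℝ) := by rw [Finset.sum_const, Finset.card_univ, Fintype.card_fin]; ring
          _ ≤ ((8 * (n + 1) ^ 2 : ℕ) : ℝ) * s := by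
              have hnat : n * (3 * P) ≤ 4 * (n + 1) ^ 2 * t := by
                have hP1 : P = (n + 1) * t := by rw [hPdef]; ring
                rw [hP1]
                nlinarith
              have hc : ((n * (3 * P) : ℕ) : ℝ) ≤ ((4 * (n + 1) ^ 2 * t : ℕ) : ℝ) :=
                Nat.cast_le.mpr hnat
              push_cast at hc ⊢
              have h2 : 4 * ((n:ℝ) + 1) ^ 2 * (t:ℝ) ≤ 8 * ((n:ℝ) + 1) ^ 2 * s := by
                nlinarith [sq_nonneg ((n:ℝ) + 1), ht2s]
              linarith
end

section
/- There exists a countable locally finite group G with a proper left invariant metric d_G such that (G, d_G) has infinite asymptotic Assouad-Nagata dimension, i.e. for every n there is no linear-plus-constant n-dimensional control function for (G, d_G). -/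
/-- Asymptotic dimension at most `n`. -/
def AsdimLE {X : Type*} (d : X → X → ℝ) (n : ℕ) : Prop :=
  ∃ D : ℝ → ℝ, IsControlFun d n D

/-- `d` is a proper left invariant metric on the group `G`. -/
def IsPLIMetric {G : Type*} [Group G] (d : G → G → ℝ) : Prop :=
  (∀ x y : G, d x y = 0 ↔ x = y) ∧ (∀ x y : G, d x y = d y x) ∧
    (∀ x y z : G, d x z ≤ d x y + d y z) ∧
    (∀ g x y : G, d (g * x) (g * y) = d x y) ∧
    ∀ K : ℝ, {g : G | d 1 g ≤ K}.Finite

/-- A group is locally finite if every finitely generated subgroup is finite. -/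
def LocallyFiniteGroup (G : Type*) [Group G] : Prop :=
  ∀ s : Finset G, ((Subgroup.closure (s : Set G) : Subgroup G) : Set G).Finite

/-!
Take `G = ⊕_{(N, k)} (ℤ/(k+1))^N` with the length `ℓ g = ∑ (N + k + 1) ‖g_{(N,k)}‖_∞`, where
`‖·‖_∞` is the largest circular absolute value of the coordinates, and `d x y = ℓ (x⁻¹ y)`.
The weights make balls finite, and a finite set lies in finitely many summands, which form a
finite subgroup.

The summand `(ℤ/(4K+1))^N` is, up to the factor `w = N + 4K + 1`, the cube `{0, …, 2K}^N` with the
sup metric. By Hales–Jewett, for `N` large every cover by `n + 1` sets has a piece containing a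
combinatorial line, which is a chain of step `w < 2w` whose ends are `2Kw = K · 2w` apart; at scale
`s = 2w` this defeats every control function `C s + b` once `K > C + |b|`.
-/

open Combinatorics

theorem isPLIMetric_of_groupNorm {G : Type*} [Group G] (N : GroupNorm G)
    (hN : ∀ K : ℝ, {g : G | N g ≤ K}.Finite) : IsPLIMetric fun x y : G => N (x⁻¹ * y) := by
  refine ⟨fun x y => ?_, fun x y => ?_, fun x y z => ?_, fun g x y => ?_, fun K => ?_⟩ <;>
    dsimp only
  · rw [map_eq_zero_iff_eq_one, inv_mul_eq_one]
  · rw [← map_inv_eq_map, mul_inv_rev, inv_inv]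
  · simpa only [mul_assoc, mul_inv_cancel_left] using map_mul_le_add N (x⁻¹ * y) (y⁻¹ * z)
  · rw [mul_inv_rev, mul_assoc, inv_mul_cancel_left]
  · simpa only [inv_one, one_mul] using hN K

theorem LocallyFiniteGroup.of_forall_exists_finite_subgroup {G : Type*} [Group G]
    (h : ∀ s : Finset G, ∃ H : Subgroup G, (H : Set G).Finite ∧ (s : Set G) ⊆ H) :
    LocallyFiniteGroup G := fun s =>
  let ⟨H, hH, hs⟩ := h s
  hH.subset ((Subgroup.closure_le H).mpr hs)

theorem not_ANdimLE_of_forall_exists_scaleChain {X : Type*} (d : X → X → ℝ) (n : ℕ)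
    (h : ∀ K : ℕ, ∃ s ≥ (1 : ℝ), ∀ U : Fin (n + 1) → Set X, (∀ x, ∃ i, x ∈ U i) →
      ∃ i x y, ScaleChain d s (U i) x y ∧ K * s ≤ d x y) :
    ¬ ANdimLE d n := by
  rintro ⟨C, -, b, hD⟩
  obtain ⟨K, hK⟩ := exists_nat_gt (C + |b|)
  obtain ⟨s, hs, hchain⟩ := h K
  obtain ⟨U, hcover, hbound⟩ := hD s (by linarith)
  obtain ⟨i, x, y, hxy, hlarge⟩ := hchain U hcover
  have hupper := hbound i x y hxy
  nlinarith [le_abs_self b, abs_nonneg b]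

theorem DFinsupp.finite_setOf_support_subset {ι : Type*} [DecidableEq ι] {β : ι → Type*}
    [∀ i, Zero (β i)] [∀ i, Finite (β i)] [∀ i (x : β i), Decidable (x ≠ 0)] (s : Finset ι) :
    {f : Π₀ i, β i | f.support ⊆ s}.Finite := by
  refine Set.Finite.of_finite_image (f := fun f (i : s) => f i) (Set.toFinite _) ?_
  intro f hf g hg hfg
  ext i
  by_cases hi : i ∈ s
  · exact congrFun hfg ⟨i, hi⟩
  · rw [DFinsupp.notMem_support_iff.mp fun h => hi (hf h),
      DFinsupp.notMem_support_iff.mp fun h => hi (hg h)]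

theorem ZMod.natAbs_valMinAbs_one_le (k : ℕ) : (1 : ZMod (k + 1)).valMinAbs.natAbs ≤ 1 := by
  rw [ZMod.valMinAbs_natAbs_eq_min, ZMod.val_one_eq_one_mod]
  exact (min_le_left _ _).trans (Nat.mod_le _ _)

section CubeNorm

variable {ι : Type*} [Fintype ι] {m : ℕ}

def cubeNorm (v : ι → ZMod m) : ℕ := Finset.univ.sup fun i => (v i).valMinAbs.natAbs

theorem natAbs_valMinAbs_le_cubeNorm (v : ι → ZMod m) (i : ι) :
    (v i).valMinAbs.natAbs ≤ cubeNorm v :=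
  Finset.le_sup (f := fun i => (v i).valMinAbs.natAbs) (Finset.mem_univ i)

theorem cubeNorm_eq_zero {v : ι → ZMod m} : cubeNorm v = 0 ↔ v = 0 := by
  simp [cubeNorm, funext_iff]

theorem cubeNorm_neg (v : ι → ZMod m) : cubeNorm (-v) = cubeNorm v := by
  simp only [cubeNorm, Pi.neg_apply, ZMod.natAbs_valMinAbs_neg]

theorem cubeNorm_add_le (v w : ι → ZMod m) : cubeNorm (v + w) ≤ cubeNorm v + cubeNorm w :=
  Finset.sup_le fun i _ => calc
    (v i + w i).valMinAbs.natAbs ≤ ((v i).valMinAbs + (w i).valMinAbs).natAbs :=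
      ZMod.natAbs_valMinAbs_add_le _ _
    _ ≤ (v i).valMinAbs.natAbs + (w i).valMinAbs.natAbs := Int.natAbs_add_le _ _
    _ ≤ cubeNorm v + cubeNorm w :=
      add_le_add (natAbs_valMinAbs_le_cubeNorm v i) (natAbs_valMinAbs_le_cubeNorm w i)

theorem cubeNorm_subspace_sub (l : Subspace Unit (ZMod m) ι) (x y : ZMod m) :
    cubeNorm (l (fun _ => x) - l (fun _ => y)) = (x - y).valMinAbs.natAbs := by
  refine le_antisymm (Finset.sup_le fun i _ => ?_) ?_
  · rcases h : l.idxFun i with a | u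
    · simp [Subspace.apply_inl h]
    · simp [Subspace.apply_inr h]
  · obtain ⟨i, hi⟩ := l.proper ()
    simpa [Subspace.apply_inr hi] using
      natAbs_valMinAbs_le_cubeNorm (l (fun _ => x) - l (fun _ => y)) i

end CubeNorm

namespace CubeSum

abbrev Block (p : ℕ × ℕ) : Type := Fin p.1 → ZMod (p.2 + 1)

def weight (p : ℕ × ℕ) : ℕ := p.1 + p.2 + 1

def weightedNorm (a : Π₀ p, Block p) : ℕ := a.sum fun p v => weight p * cubeNorm v

theorem weightedNorm_eq_sum {a : Π₀ p, Block p} {s : Finset (ℕ × ℕ)} (hs : a.support ⊆ s) :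
    weightedNorm a = ∑ p ∈ s, weight p * cubeNorm (a p) :=
  DFinsupp.sum_of_support_subset hs fun p _ => by rw [cubeNorm_eq_zero.mpr rfl, mul_zero]

theorem weight_le_weightedNorm {a : Π₀ p, Block p} {p : ℕ × ℕ} (hp : p ∈ a.support) :
    weight p ≤ weightedNorm a := calc
  weight p ≤ weight p * cubeNorm (a p) :=
    Nat.le_mul_of_pos_right _ (Nat.pos_of_ne_zero (cubeNorm_eq_zero.not.mpr
      (DFinsupp.mem_support_iff.mp hp)))
  _ ≤ weightedNorm a :=
    Finset.single_le_sum (f := fun p => weight p * cubeNorm (a p)) (fun _ _ => Nat.zero_le _) hp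

theorem weightedNorm_eq_zero {a : Π₀ p, Block p} : weightedNorm a = 0 ↔ a = 0 := by
  refine ⟨fun h => ?_, fun h => by rw [h, weightedNorm, DFinsupp.sum_zero_index]⟩
  rw [← DFinsupp.support_eq_empty, Finset.eq_empty_iff_forall_notMem]
  intro p hp
  have := weight_le_weightedNorm hp
  simp only [weight, h] at this
  omega

theorem weightedNorm_neg (a : Π₀ p, Block p) : weightedNorm (-a) = weightedNorm a := by
  rw [weightedNorm, DFinsupp.sum_neg_index fun p => by rw [cubeNorm_eq_zero.mpr rfl, mul_zero]]
  simp only [cubeNorm_neg, weightedNorm]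

theorem weightedNorm_add_le (a b : Π₀ p, Block p) :
    weightedNorm (a + b) ≤ weightedNorm a + weightedNorm b := by
  rw [weightedNorm_eq_sum (DFinsupp.support_add (g₁ := a) (g₂ := b)),
    weightedNorm_eq_sum Finset.subset_union_left, weightedNorm_eq_sum Finset.subset_union_right,
    ← Finset.sum_add_distrib]
  refine Finset.sum_le_sum fun p _ => ?_
  rw [DFinsupp.add_apply, ← Nat.mul_add]
  exact Nat.mul_le_mul_left _ (cubeNorm_add_le _ _)

theorem weightedNorm_single (p : ℕ × ℕ) (v : Block p) :
    weightedNorm (DFinsupp.single p v) = weight p * cubeNorm v :=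
  DFinsupp.sum_single_index (by rw [cubeNorm_eq_zero.mpr rfl, mul_zero])

abbrev G : Type := Multiplicative (Π₀ p, Block p)

def groupNorm : GroupNorm G where
  toFun g := weightedNorm g.toAdd
  map_one' := by simp [weightedNorm_eq_zero]
  mul_le' x y := by exact_mod_cast weightedNorm_add_le x.toAdd y.toAdd
  inv' x := by simp [weightedNorm_neg]
  eq_one_of_map_eq_zero' x h := by simpa [weightedNorm_eq_zero] using h

theorem groupNorm_apply (g : G) : groupNorm g = weightedNorm g.toAdd := rfl

def dist (x y : G) : ℝ := groupNorm (x⁻¹ * y)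

theorem dist_ofAdd_single (p : ℕ × ℕ) (u v : Block p) :
    dist (.ofAdd (DFinsupp.single p u)) (.ofAdd (DFinsupp.single p v)) =
      weight p * cubeNorm (v - u) := by
  rw [dist, groupNorm_apply, toAdd_mul, toAdd_inv, toAdd_ofAdd, toAdd_ofAdd,
    ← DFinsupp.single_neg, ← DFinsupp.single_add, neg_add_eq_sub, weightedNorm_single,
    Nat.cast_mul]

def supportedSubgroup (s : Finset (ℕ × ℕ)) : Subgroup G where
  carrier := {g | g.toAdd.support ⊆ s}
  one_mem' := by simp
  mul_mem' hx hy := DFinsupp.support_add.trans (Finset.union_subset hx hy)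
  inv_mem' hx := by simpa using hx

theorem finite_supportedSubgroup (s : Finset (ℕ × ℕ)) : (supportedSubgroup s : Set G).Finite :=
  DFinsupp.finite_setOf_support_subset s

theorem locallyFiniteGroup : LocallyFiniteGroup G :=
  .of_forall_exists_finite_subgroup fun s =>
    ⟨supportedSubgroup (s.biUnion fun g => g.toAdd.support), finite_supportedSubgroup _,
      fun _ hg => Finset.subset_biUnion_of_mem (fun g : G => g.toAdd.support) hg⟩

theorem finite_groupNorm_le (K : ℝ) : {g : G | groupNorm g ≤ K}.Finite := by
  let r := Finset.range ⌊K⌋₊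
  refine (finite_supportedSubgroup (r ×ˢ r)).subset fun g (hg : groupNorm g ≤ K) p hp => ?_
  have hpK : weight p ≤ ⌊K⌋₊ :=
    Nat.le_floor ((Nat.cast_le.mpr (weight_le_weightedNorm hp)).trans hg)
  simp only [weight] at hpK
  simp only [r, Finset.mem_product, Finset.mem_range]
  omega

theorem isPLIMetric_dist : IsPLIMetric dist :=
  isPLIMetric_of_groupNorm groupNorm finite_groupNorm_le

theorem exists_scaleChain (n K : ℕ) :
    ∃ s ≥ (1 : ℝ), ∀ U : Fin (n + 1) → Set G, (∀ x, ∃ i, x ∈ U i) →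
      ∃ i x y, ScaleChain dist s (U i) x y ∧ K * s ≤ dist x y := by
  obtain ⟨N, hHJ⟩ :=
    Subspace.exists_mono_in_high_dimension_fin (ZMod (4 * K + 1)) (Fin (n + 1)) Unit
  let p : ℕ × ℕ := (N, 4 * K)
  have hweight : (1 : ℝ) ≤ weight p := by exact_mod_cast Nat.le_add_left 1 (N + 4 * K)
  refine ⟨2 * weight p, by linarith, fun U hU => ?_⟩
  choose color hcolor using hU
  obtain ⟨l, i, hl⟩ := hHJ fun v => color (.ofAdd (DFinsupp.single p v))
  let c (t : ℕ) : G := .ofAdd (DFinsupp.single p (l fun _ => (t : ZMod (4 * K + 1))))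
  have hdist (t u : ℕ) :
      dist (c t) (c u) = weight p * ((u : ZMod (4 * K + 1)) - t).valMinAbs.natAbs := by
    rw [dist_ofAdd_single, cubeNorm_subspace_sub]
  refine ⟨i, c 0, c (2 * K), ⟨2 * K, c, rfl, rfl, fun t _ => hl (fun _ => t) ▸ hcolor (c t),
    fun t _ => ?_⟩, ?_⟩
  · have hstep := ZMod.natAbs_valMinAbs_one_le (4 * K)
    rw [hdist, Nat.cast_succ, add_sub_cancel_left]
    calc (weight p : ℝ) * ((1 : ZMod (4 * K + 1)).valMinAbs.natAbs : ℕ)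
        ≤ weight p * 1 := by gcongr; exact_mod_cast hstep
      _ < 2 * weight p := by linarith
  · rw [hdist, Nat.cast_zero, sub_zero, ZMod.valMinAbs_natCast_of_le_half (by omega),
      Int.natAbs_natCast]
    push_cast
    linarith

end CubeSum

/-- There is a countable locally finite group with a proper left invariant metric of
infinite asymptotic Assouad-Nagata dimension: no linear-plus-constant `n`-dimensional
control function exists for any `n`. -/
theorem exists_locally_finite_group_asdimAN_infinite :
    ∃ (G : Type) (inst : Group G) (d : G → G → ℝ),
      Countable G ∧ @LocallyFiniteGroup G inst ∧ @IsPLIMetric G inst d ∧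
        ∀ n : ℕ, ¬ ANdimLE d n :=
  ⟨CubeSum.G, inferInstance, CubeSum.dist, inferInstanceAs (Countable (Π₀ p, CubeSum.Block p)),
    CubeSum.locallyFiniteGroup, CubeSum.isPLIMetric_dist,
    fun n => not_ANdimLE_of_forall_exists_scaleChain _ n (CubeSum.exists_scaleChain n)⟩
end

section
/- Let G be an infinite countable locally finite group. For every increasing function f: ℝ₊ → ℝ₊ with f(x) → ∞ there exists a proper left invariant metric d_G on G such that f is not a 0-dimensional control function of (G, d_G); that is, there exist s > 0 and two points in the same s-scale connected component of G at distance greater than f(s). -/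
open Filter

/-!
Only the scale `s = 2` is needed. Put `D = ⌈f 2⌉₊` and pick `m` with `(2m+1)^D < 2^m`. As `G` is
infinite and locally finite, at most `m` elements generate a finite subgroup of order at least
`2^m`: each new generator lies outside the subgroup generated so far, so it at least doubles it.
Take the word metric in which the letters of `S = A ∪ A⁻¹` have weight `1` and every other
letter `g` has weight `D + 1 + e g + e g⁻¹`, for an injection `e : G → ℕ`. It is proper because
the finitely many letters of bounded weight generate a finite subgroup. The subgroup `⟨A⟩` lies
in one `2`-scale component, but the ball of radius `D` lies in `(insert 1 S)^D`, which has fewer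
than `2^m` elements, so some point of `⟨A⟩` is farther than `D ≥ f 2` from `1`.
-/

open Pointwise

theorem Finset.list_prod_mem_pow {M : Type*} [Monoid M] [DecidableEq M] {S : Finset M}
    {L : List M} (hL : ∀ x ∈ L, x ∈ S) : L.prod ∈ S ^ L.length := by
  induction L with
  | nil => simp
  | cons a L ih =>
    rw [List.prod_cons, List.length_cons, pow_succ']
    exact Finset.mul_mem_mul (hL a List.mem_cons_self)
      (ih fun x hx => hL x (List.mem_cons_of_mem a hx))

section WordLength

variable {M : Type*} [Monoid M] (w : M → ℕ)

noncomputable def wordLength (g : M) : ℕ :=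
  sInf {k | ∃ L : List M, L.prod = g ∧ (L.map w).sum = k}

theorem exists_list_sum_eq_wordLength (g : M) :
    ∃ L : List M, L.prod = g ∧ (L.map w).sum = wordLength w g :=
  Nat.sInf_mem (s := {k | ∃ L : List M, L.prod = g ∧ (L.map w).sum = k})
    ⟨w g, [g], by simp, by simp⟩

theorem wordLength_le_sum {g : M} (L : List M) (h : L.prod = g) :
    wordLength w g ≤ (L.map w).sum :=
  Nat.sInf_le ⟨L, h, rfl⟩

theorem wordLength_le_weight (g : M) : wordLength w g ≤ w g := by
  simpa using wordLength_le_sum w [g] (by simp)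

theorem wordLength_one : wordLength w 1 = 0 :=
  Nat.eq_zero_of_le_zero (by simpa using wordLength_le_sum w [] List.prod_nil)

theorem wordLength_mul_le (g h : M) :
    wordLength w (g * h) ≤ wordLength w g + wordLength w h := by
  obtain ⟨L₁, rfl, h₁⟩ := exists_list_sum_eq_wordLength w g
  obtain ⟨L₂, rfl, h₂⟩ := exists_list_sum_eq_wordLength w h
  simpa [h₁, h₂] using wordLength_le_sum w (L₁ ++ L₂) List.prod_append

theorem exists_list_of_wordLength_le (hw : ∀ x, 1 ≤ w x) {g : M} {n : ℕ}
    (h : wordLength w g ≤ n) :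
    ∃ L : List M, L.prod = g ∧ L.length ≤ n ∧ ∀ x ∈ L, w x ≤ n := by
  obtain ⟨L, hL, hsum⟩ := exists_list_sum_eq_wordLength w g
  refine ⟨L, hL, ?_, fun x hx => ?_⟩
  · calc L.length = (L.map w).length := (List.length_map _).symm
      _ ≤ (L.map w).sum := List.length_le_sum_of_one_le _ (by simpa using fun x _ => hw x)
      _ ≤ n := hsum ▸ h
  · exact (List.le_sum_of_mem (List.mem_map_of_mem hx)).trans (hsum ▸ h)

theorem eq_one_of_wordLength_eq_zero (hw : ∀ x, 1 ≤ w x) {g : M} (h : wordLength w g = 0) :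
    g = 1 := by
  obtain ⟨L, rfl, hlen, -⟩ := exists_list_of_wordLength_le w hw h.le
  simp [List.eq_nil_of_length_eq_zero (Nat.eq_zero_of_le_zero hlen)]

theorem mem_pow_of_wordLength_le [DecidableEq M] (hw : ∀ x, 1 ≤ w x) {S : Finset M} {n : ℕ}
    (hS : ∀ x ∉ S, n < w x) {g : M} (hg : wordLength w g ≤ n) : g ∈ insert 1 S ^ n := by
  obtain ⟨L, rfl, hlen, hL⟩ := exists_list_of_wordLength_le w hw hg
  refine Finset.pow_subset_pow_right (Finset.mem_insert_self 1 S) hlen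
    (Finset.list_prod_mem_pow fun x hx => Finset.mem_insert_of_mem ?_)
  by_contra hxS
  exact (hS x hxS).not_ge (hL x hx)

end WordLength

section WordMetric

variable {G : Type*} [Group G] (w : G → ℕ)

theorem wordLength_inv (hw : ∀ x, w x⁻¹ = w x) (g : G) :
    wordLength w g⁻¹ = wordLength w g := by
  have key (g : G) : wordLength w g⁻¹ ≤ wordLength w g := by
    obtain ⟨L, rfl, hsum⟩ := exists_list_sum_eq_wordLength w g
    calc wordLength w L.prod⁻¹ ≤ ((L.map (·⁻¹)).reverse.map w).sum :=
          wordLength_le_sum w _ (List.prod_inv_reverse L).symm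
      _ = wordLength w L.prod := by simp [Function.comp_def, hw, hsum]
  exact (key g).antisymm (by simpa using key g⁻¹)

noncomputable def wordDist (x y : G) : ℝ :=
  wordLength w (x⁻¹ * y)

theorem wordDist_mul_le_weight (x a : G) : wordDist w x (x * a) ≤ w a := by
  simpa [wordDist] using wordLength_le_weight w a

theorem isPLIMetric_wordDist (hLF : LocallyFiniteGroup G) (hw : ∀ x, 1 ≤ w x)
    (hw_inv : ∀ x, w x⁻¹ = w x) (hw_fin : ∀ n, {x | w x ≤ n}.Finite) :
    IsPLIMetric (wordDist w) := by
  refine ⟨fun x y => ?_, fun x y => ?_, fun x y z => ?_, fun g x y => ?_, fun K => ?_⟩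
  · simp only [wordDist, Nat.cast_eq_zero]
    refine ⟨fun h => ?_, fun h => by simp [h, wordLength_one]⟩
    exact inv_mul_eq_one.mp (eq_one_of_wordLength_eq_zero w hw h)
  · rw [wordDist, wordDist, ← wordLength_inv w hw_inv, mul_inv_rev, inv_inv]
  · have := wordLength_mul_le w (x⁻¹ * y) (y⁻¹ * z)
    simp only [wordDist, ← Nat.cast_add, Nat.cast_le]
    simpa [mul_assoc] using this
  · simp [wordDist, mul_assoc]
  · -- the `K`-ball lies in the subgroup generated by the finitely many letters of weight `≤ K`
    refine ((hLF (hw_fin ⌊K⌋₊).toFinset).subset fun g hg => ?_)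
    have hg : wordLength w g ≤ ⌊K⌋₊ := Nat.le_floor (by simpa [wordDist] using hg)
    obtain ⟨L, rfl, -, hL⟩ := exists_list_of_wordLength_le w hw hg
    exact Subgroup.list_prod_mem _ fun x hx => Subgroup.subset_closure (by simpa using hL x hx)

end WordMetric

theorem exists_isPLIMetric_ball_subset_pow {G : Type*} [Group G] [Countable G] [DecidableEq G]
    (hLF : LocallyFiniteGroup G) {S : Finset G} (hS : S⁻¹ = S) (n : ℕ) :
    ∃ d : G → G → ℝ, IsPLIMetric d ∧ (∀ x, ∀ a ∈ S, d x (x * a) ≤ 1) ∧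
      ∀ g, d 1 g ≤ n → g ∈ insert 1 S ^ n := by
  obtain ⟨e, he⟩ := exists_injective_nat G
  let w : G → ℕ := fun g => if g ∈ S then 1 else n + 1 + e g + e g⁻¹
  have hw : ∀ x, 1 ≤ w x := fun x => by unfold w; split_ifs <;> omega
  have hw_inv : ∀ x, w x⁻¹ = w x := fun x => by
    have hSx : x⁻¹ ∈ S ↔ x ∈ S := by rw [← Finset.mem_inv', hS]
    simp only [w, inv_inv, hSx]
    split_ifs <;> omega
  have hw_fin : ∀ k, {x | w x ≤ k}.Finite := fun k =>
    (S.finite_toSet.union ((Set.finite_le_nat k).preimage he.injOn)).subset fun x hx => by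
      by_cases hxS : x ∈ S
      · exact Or.inl hxS
      · have hx : n + 1 + e x + e x⁻¹ ≤ k := by simpa [w, hxS] using hx
        exact Or.inr (show e x ≤ k by omega)
  refine ⟨wordDist w, isPLIMetric_wordDist w hLF hw hw_inv hw_fin, fun x a ha => ?_,
    fun g hg => mem_pow_of_wordLength_le w hw (fun x hx => ?_) ?_⟩
  · simpa [w, ha] using wordDist_mul_le_weight w x a
  · simp only [w, if_neg hx]
    omega
  · exact_mod_cast (by simpa [wordDist] using hg : (wordLength w g : ℝ) ≤ n)

section ScaleChains

variable {M : Type*} [Monoid M] {d : M → M → ℝ} {s : ℝ} {T : Set M}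

theorem scaleChain_mul_list_prod (hT : ∀ x, ∀ a ∈ T, d x (x * a) < s) (x : M) {L : List M}
    (hL : ∀ a ∈ L, a ∈ T) : ScaleChain d s Set.univ x (x * L.prod) := by
  refine ⟨L.length, fun i => x * (L.take i).prod, by simp, by simp, fun _ _ => trivial,
    fun i hi => ?_⟩
  show d (x * (L.take i).prod) (x * (L.take (i + 1)).prod) < s
  rw [List.prod_take_succ L i hi, ← mul_assoc]
  exact hT _ _ (hL _ (List.getElem_mem hi))

theorem IsControlFun.dist_le_of_mem_closure {D : ℝ → ℝ} (hD : IsControlFun d 0 D) (hs : 0 < s)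
    (hT : ∀ x, ∀ a ∈ T, d x (x * a) < s) {g : M} (hg : g ∈ Submonoid.closure T) :
    d 1 g ≤ D s := by
  obtain ⟨U, hcover, hbound⟩ := hD s hs
  have hU : U 0 = Set.univ := Set.eq_univ_of_forall fun x => by
    simpa [Fin.fin_one_eq_zero] using hcover x
  obtain ⟨L, hL, rfl⟩ := Submonoid.exists_list_of_mem_closure hg
  exact hbound 0 1 _ (hU ▸ by simpa using scaleChain_mul_list_prod hT 1 hL)

end ScaleChains

theorem Subgroup.two_mul_card_le_card_of_lt {G : Type*} [Group G] {H K : Subgroup G} (h : H < K)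
    [Finite K] : 2 * Nat.card H ≤ Nat.card K := by
  have : Finite H := Finite.of_injective _ (Subgroup.inclusion_injective h.le)
  obtain ⟨q, hq⟩ := Subgroup.card_dvd_of_le h.le
  have hlt : Nat.card H < Nat.card K :=
    lt_of_not_ge fun hge => h.ne (Subgroup.eq_of_le_of_card_ge h.le hge)
  have hq2 : 2 ≤ q := (lt_mul_iff_one_lt_right Nat.card_pos).mp (hq ▸ hlt)
  rw [hq, mul_comm 2]
  exact Nat.mul_le_mul_left _ hq2

theorem LocallyFiniteGroup.exists_finset_two_pow_le_card_closure {G : Type*} [Group G]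
    [Infinite G] [DecidableEq G] (hLF : LocallyFiniteGroup G) (m : ℕ) :
    ∃ A : Finset G, A.card ≤ m ∧ 2 ^ m ≤ Nat.card (Subgroup.closure (A : Set G)) := by
  induction m with
  | zero => exact ⟨∅, by simp, Nat.one_le_iff_ne_zero.mpr (by simp)⟩
  | succ m ih =>
    obtain ⟨A, hA, hcard⟩ := ih
    obtain ⟨g, hg⟩ := (hLF A).infinite_compl.nonempty
    have hlt : Subgroup.closure (A : Set G) < Subgroup.closure (insert g A : Finset G) := by
      rw [Finset.coe_insert]
      refine lt_of_le_of_ne (Subgroup.closure_mono (Set.subset_insert g _)) fun h => hg ?_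
      rw [SetLike.mem_coe, h]
      exact Subgroup.subset_closure (Set.mem_insert g _)
    have := (hLF (insert g A)).to_subtype
    refine ⟨insert g A, (Finset.card_insert_le g A).trans (Nat.succ_le_succ hA), ?_⟩
    calc 2 ^ (m + 1) = 2 * 2 ^ m := by ring
      _ ≤ 2 * Nat.card (Subgroup.closure (A : Set G)) := by omega
      _ ≤ _ := Subgroup.two_mul_card_le_card_of_lt hlt

theorem exists_pow_lt_two_pow (D : ℕ) : ∃ m : ℕ, (2 * m + 1) ^ D < 2 ^ m := by
  obtain ⟨m, hm, hm1⟩ := (((tendsto_pow_const_div_const_pow_of_one_lt D one_lt_two).eventually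
    (gt_mem_nhds (by positivity : (0 : ℝ) < (3 ^ D)⁻¹))).and (eventually_ge_atTop 1)).exists
  refine ⟨m, ?_⟩
  have h3m : ((2 * m + 1 : ℕ) : ℝ) ≤ 3 * m := by
    exact_mod_cast (by omega : 2 * m + 1 ≤ 3 * m)
  have : ((2 * m + 1 : ℕ) : ℝ) ^ D < 2 ^ m := calc
    _ ≤ (3 * m : ℝ) ^ D := pow_le_pow_left₀ (by positivity) h3m D
    _ = 3 ^ D * ((m : ℝ) ^ D / 2 ^ m) * 2 ^ m := by field_simp; ring
    _ < 3 ^ D * (3 ^ D)⁻¹ * 2 ^ m := by gcongr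
    _ = 2 ^ m := by field_simp
  exact_mod_cast this

theorem exists_metric_defeating_zero_control_general {G : Type*} [Group G] [Countable G]
    [Infinite G] (hLF : LocallyFiniteGroup G)
    (f : ℝ → ℝ) :
    ∃ d : G → G → ℝ, IsPLIMetric d ∧ ¬ IsControlFun d 0 f := by
  classical
  set D := ⌈f 2⌉₊
  obtain ⟨m, hm⟩ := exists_pow_lt_two_pow D
  obtain ⟨A, hAm, hAcard⟩ := hLF.exists_finset_two_pow_le_card_closure m
  set S := A ∪ A⁻¹
  obtain ⟨d, hd, hstep, hball⟩ :=
    exists_isPLIMetric_ball_subset_pow hLF (S := S) (by ext; simp [S, or_comm]) D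
  refine ⟨d, hd, fun hf => ?_⟩
  -- the subgroup generated by `A` is one `2`-scale component, hence lies in the `D`-ball
  have hsub : (Subgroup.closure (A : Set G) : Set G) ⊆ (insert 1 S ^ D : Finset G) := by
    intro g hg
    rw [SetLike.mem_coe, ← Subgroup.mem_toSubmonoid, Subgroup.closure_toSubmonoid] at hg
    exact hball g ((hf.dist_le_of_mem_closure two_pos (T := (S : Set G))
      (fun x a ha => (hstep x a ha).trans_lt one_lt_two) (by simpa [S] using hg)).trans
      (Nat.le_ceil _))
  have : Nat.card (Subgroup.closure (A : Set G)) ≤ (2 * m + 1) ^ D := calc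
    _ ≤ (insert 1 S ^ D).card :=
      (Nat.card_mono (Finset.finite_toSet _) hsub).trans_eq (Nat.card_eq_finsetCard _)
    _ ≤ (insert 1 S).card ^ D := Finset.card_pow_le
    _ ≤ (2 * m + 1) ^ D := by
      gcongr
      have hS : S.card ≤ 2 * m := by
        simpa [S, two_mul] using (Finset.card_union_le A A⁻¹).trans (by simp; omega)
      exact (Finset.card_insert_le 1 S).trans (by omega)
  omega

/-- On an infinite countable locally finite group, for every increasing `f` tending to
infinity there is a proper left invariant metric for which `f` fails to be a
`0`-dimensional control function. -/
theorem exists_metric_defeating_zero_control {G : Type*} [Group G] [Countable G]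
    [Infinite G] (hLF : LocallyFiniteGroup G)
    (f : ℝ → ℝ) (hf : Monotone f) (hft : Tendsto f atTop atTop) :
    ∃ d : G → G → ℝ, IsPLIMetric d ∧ ¬ IsControlFun d 0 f :=
  exists_metric_defeating_zero_control_general hLF f
end
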